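/- arXiv:2605.25515 — 8 statements merged into one kernel-verified Lean document; each statement's English description precedes it below -/
import Mathlib

section
/- There exist constants C > 0 and p₀ ∈ (0,1) such that for every p ∈ (0, p₀], setting q = 1 − p, the quantity −log (q;q)_∞ satisfies | −log (q;q)_∞ − π²/(6p) | ≤ C·(1 + log(1/p)). -/
/-!
Expanding every logarithm in `−log (q;q)_∞ = ∑_j −log (1 − q^(j+1))` into its power series and
summing the resulting double series by columns gives the Lambert series
`−log (q;q)_∞ = ∑_{m ≥ 1} q^m / (m (1 − q^m))`. With `q = 1 − p`, Bernoulli's inequality and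
`(1 + m p)(1 − p)^m ≤ (1 − p²)^m ≤ 1` pin `1 − q^m` between `m p q^m` and `m p`, so the `m`-th
term differs from `1 / (m² p)` by at most `min (1/m) (1/(m² p))`, while `∑ 1 / (m² p) = π² / (6p)`.
Splitting the sum of these minima at `m ≈ 1/p` bounds it by a harmonic sum `≤ 2 + log (1/p)` plus a
tail `≤ 1`.
-/

noncomputable section

/-- The infinite q-Pochhammer product `(q;q)_∞ = ∏_{j=1}^∞ (1 − q^j)`. -/
def qPochInf (q : ℝ) : ℝ := ∏' j : ℕ, (1 - q ^ (j + 1))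

open Real Finset

lemma one_add_mul_mul_one_sub_pow_le_one {p : ℝ} (hp0 : 0 ≤ p) (hp1 : p ≤ 1) (n : ℕ) :
    (1 + n * p) * (1 - p) ^ n ≤ 1 :=
  calc (1 + n * p) * (1 - p) ^ n ≤ (1 + p) ^ n * (1 - p) ^ n := by
        gcongr
        exact one_add_mul_le_pow (by linarith) n
    _ = (1 - p ^ 2) ^ n := by rw [← mul_pow]; ring
    _ ≤ 1 := pow_le_one₀ (by nlinarith) (by nlinarith)

lemma abs_div_mul_one_sub_sub_le_min {x m p : ℝ} (hm : 0 < m) (hp : 0 < p) (hx : 0 ≤ x)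
    (hlow : (1 + m * p) * x ≤ 1) (hup : 1 - x ≤ m * p) :
    |x / (m * (1 - x)) - 1 / (m ^ 2 * p)| ≤ min (1 / m) (1 / (m ^ 2 * p)) := by
  have hx1 : 0 < 1 - x := by nlinarith [mul_pos hm hp]
  have hdiff : 1 / (m ^ 2 * p) - x / (m * (1 - x))
      = ((1 - x) - m * p * x) / (m ^ 2 * p * (1 - x)) := by
    field_simp
  rw [abs_sub_comm, hdiff, abs_of_nonneg (by apply div_nonneg <;> nlinarith [mul_pos hm hp]),
    le_min_iff, div_le_div_iff₀ (by positivity) hm, div_le_div_iff₀ (by positivity) (by positivity)]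
  constructor
  · nlinarith [mul_pos (mul_pos hm hm) hp]
  · nlinarith [mul_pos (mul_pos hm hm) hp, mul_nonneg (mul_pos hm hp).le hx]

lemma abs_lambert_term_sub_le {p : ℝ} (hp0 : 0 < p) (hp1 : p ≤ 1) (k : ℕ) :
    |(1 - p) ^ (k + 1) / (((k : ℝ) + 1) * (1 - (1 - p) ^ (k + 1))) - 1 / (((k : ℝ) + 1) ^ 2 * p)|
      ≤ min (1 / ((k : ℝ) + 1)) (1 / (((k : ℝ) + 1) ^ 2 * p)) := by
  have hlow := one_add_mul_mul_one_sub_pow_le_one hp0.le hp1 (k + 1)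
  have hup := one_add_mul_le_pow (a := -p) (by linarith) (k + 1)
  rw [← sub_eq_add_neg] at hup
  push_cast at hlow hup
  exact abs_div_mul_one_sub_sub_le_min (by positivity) hp0 (pow_nonneg (by linarith) _) hlow
    (by linarith)

theorem hasSum_neg_log_qPochInf {q : ℝ} (hq0 : 0 ≤ q) (hq1 : q < 1) :
    HasSum (fun k : ℕ => q ^ (k + 1) / (((k : ℝ) + 1) * (1 - q ^ (k + 1))))
      (-log (qPochInf q)) := by
  have hpow_lt : ∀ n : ℕ, q ^ (n + 1) < 1 := fun n => pow_lt_one₀ hq0 hq1 n.succ_ne_zero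
  let f : ℕ × ℕ → ℝ := fun jk => (q ^ (jk.1 + 1)) ^ (jk.2 + 1) / ((jk.2 : ℝ) + 1)
  have hrow (j : ℕ) : HasSum (fun k => f (j, k)) (-log (1 - q ^ (j + 1))) :=
    hasSum_pow_div_log_of_abs_lt_one (x := q ^ (j + 1))
      (by rw [abs_of_nonneg (by positivity)]; exact hpow_lt j)
  have hcol (k : ℕ) : HasSum (fun j => f (j, k))
      (q ^ (k + 1) / (((k : ℝ) + 1) * (1 - q ^ (k + 1)))) := by
    have h := (hasSum_geometric_of_lt_one (by positivity) (hpow_lt k)).mul_left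
      (q ^ (k + 1) / ((k : ℝ) + 1))
    rw [← div_div, div_eq_mul_inv _ (1 - _)]
    refine h.congr_fun fun j => ?_
    simp only [f]
    rw [← pow_mul, mul_comm, pow_mul, pow_succ']
    ring
  have hlog_summable : Summable fun j : ℕ => log (1 - q ^ (j + 1)) := by
    simpa only [← sub_eq_add_neg] using Real.summable_log_one_add_of_summable
      ((summable_nat_add_iff 1).mpr (summable_geometric_of_lt_one hq0 hq1)).neg
  have hf : Summable f := (summable_prod_of_nonneg fun _ => by positivity).mpr
    ⟨fun j => (hrow j).summable, hlog_summable.neg.congr fun j => (hrow j).tsum_eq.symm⟩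
  have hlog : HasSum (fun j : ℕ => log (1 - q ^ (j + 1))) (-∑' jk, f jk) := by
    simpa only [neg_neg] using (hf.hasSum.prod_fiberwise hrow).neg
  have hprod : qPochInf q = exp (-∑' jk, f jk) :=
    (Real.hasProd_of_hasSum_log (fun j => by linarith [hpow_lt j]) hlog).tprod_eq
  rw [hprod, log_exp, neg_neg, ← (Equiv.prodComm ℕ ℕ).tsum_eq f]
  exact hf.prod_symm.hasSum.prod_fiberwise hcol

lemma hasSum_one_div_succ_sq : HasSum (fun k : ℕ => 1 / ((k : ℝ) + 1) ^ 2) (π ^ 2 / 6) := by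
  simpa using (hasSum_nat_add_iff' 1).mpr hasSum_zeta_two

lemma tsum_one_div_succ_sq_nat_add_le {N : ℕ} (hN : N ≠ 0) :
    ∑' i : ℕ, 1 / (((i + N : ℕ) : ℝ) + 1) ^ 2 ≤ 1 / (N : ℝ) := by
  refine tsum_le_of_sum_range_le (fun _ => by positivity) fun n => ?_
  calc ∑ i ∈ range n, 1 / (((i + N : ℕ) : ℝ) + 1) ^ 2
        = ∑ i ∈ Ioc N (N + n), ((i : ℝ) ^ 2)⁻¹ := by
        rw [← Ico_add_one_add_one_eq_Ioc, sum_Ico_eq_sum_range, Nat.add_sub_add_right,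
          Nat.add_sub_cancel_left]
        refine sum_congr rfl fun i _ => ?_
        push_cast
        ring
    _ ≤ (N : ℝ)⁻¹ - ((N + n : ℕ) : ℝ)⁻¹ := sum_Ioc_inv_sq_le_sub hN (Nat.le_add_right N n)
    _ ≤ 1 / N := by rw [one_div]; linarith [inv_nonneg.mpr (Nat.cast_nonneg (α := ℝ) (N + n))]

lemma summable_min_one_div_succ {p : ℝ} (hp : 0 < p) :
    Summable fun k : ℕ => min (1 / ((k : ℝ) + 1)) (1 / (((k : ℝ) + 1) ^ 2 * p)) :=
  (hasSum_one_div_succ_sq.div_const p).summable.of_nonneg_of_le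
    (fun _ => le_min (by positivity) (by positivity)) fun k => by
      rw [div_div]; exact min_le_right _ _

lemma tsum_min_one_div_succ_le {p : ℝ} (hp : 0 < p) {N : ℕ} (hN : N ≠ 0) :
    ∑' k : ℕ, min (1 / ((k : ℝ) + 1)) (1 / (((k : ℝ) + 1) ^ 2 * p))
      ≤ 1 + log N + 1 / (p * N) := by
  rw [← (summable_min_one_div_succ hp).sum_add_tsum_nat_add N]
  have hhead : ∑ k ∈ range N, min (1 / ((k : ℝ) + 1)) (1 / (((k : ℝ) + 1) ^ 2 * p))
      ≤ 1 + log N :=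
    calc _ ≤ ∑ k ∈ range N, 1 / ((k : ℝ) + 1) := sum_le_sum fun k _ => min_le_left _ _
      _ = harmonic N := by simp [harmonic]
      _ ≤ 1 + log N := harmonic_le_one_add_log N
  have htail : ∑' i : ℕ,
      min (1 / (((i + N : ℕ) : ℝ) + 1)) (1 / ((((i + N : ℕ) : ℝ) + 1) ^ 2 * p)) ≤ 1 / (p * N) :=
    calc _ ≤ ∑' i : ℕ, 1 / (((i + N : ℕ) : ℝ) + 1) ^ 2 / p := by
          refine ((summable_nat_add_iff N).mpr (summable_min_one_div_succ hp)).tsum_le_tsum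
            (fun i => ?_)
            (((summable_nat_add_iff N).mpr hasSum_one_div_succ_sq.summable).div_const p)
          rw [div_div]
          exact min_le_right _ _
      _ ≤ 1 / N / p := by
          rw [tsum_div_const]; gcongr; exact tsum_one_div_succ_sq_nat_add_le hN
      _ = 1 / (p * N) := by rw [div_div, mul_comm]
  linarith

lemma tsum_min_one_div_succ_le_of_le_half {p : ℝ} (hp : 0 < p) (hp2 : p ≤ 1 / 2) :
    ∑' k : ℕ, min (1 / ((k : ℝ) + 1)) (1 / (((k : ℝ) + 1) ^ 2 * p))
      ≤ 3 * (1 + log (1 / p)) := by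
  have hinv : 2 ≤ 1 / p := by rw [le_div_iff₀ hp]; linarith
  set N := ⌈1 / p⌉₊
  have hN : (0 : ℝ) < N := by positivity
  have hN_ge : 1 / p ≤ N := Nat.le_ceil _
  have hN_le : (N : ℝ) ≤ 2 * (1 / p) := by
    linarith [Nat.ceil_lt_add_one (by positivity : 0 ≤ 1 / p)]
  have hlogN : log N ≤ log 2 + log (1 / p) := by
    rw [← log_mul two_ne_zero (by positivity)]; exact log_le_log hN hN_le
  have htail : 1 / (p * N) ≤ 1 := by
    rw [div_le_one (by positivity)]
    rw [div_le_iff₀ hp] at hN_ge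
    linarith
  have hlog_nonneg : 0 ≤ log (1 / p) := log_nonneg (by linarith)
  have := tsum_min_one_div_succ_le hp (N := N) (by exact_mod_cast hN.ne')
  linarith [log_two_lt_d9]

/-- Asymptotics of the q-Pochhammer product: there are `C > 0` and `p₀ ∈ (0,1)` such
that for all `0 < p ≤ p₀`, with `q = 1 − p`,
`|−log (q;q)_∞ − π²/(6p)| ≤ C(1 + log(1/p))`. -/
theorem stmt_6 :
    ∃ C : ℝ, 0 < C ∧ ∃ p₀ : ℝ, 0 < p₀ ∧ p₀ < 1 ∧
      ∀ p : ℝ, 0 < p → p ≤ p₀ →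
        |(-Real.log (qPochInf (1 - p))) - Real.pi ^ 2 / (6 * p)| ≤
          C * (1 + Real.log (1 / p)) := by
  refine ⟨3, by norm_num, 1 / 2, by norm_num, by norm_num, fun p hp hp2 => ?_⟩
  have hlambert := hasSum_neg_log_qPochInf (q := 1 - p) (by linarith) (by linarith)
  have hbasel : HasSum (fun k : ℕ => 1 / (((k : ℝ) + 1) ^ 2 * p)) (π ^ 2 / (6 * p)) := by
    simpa only [div_div] using hasSum_one_div_succ_sq.div_const p
  calc |(-log (qPochInf (1 - p))) - π ^ 2 / (6 * p)|
      ≤ ∑' k : ℕ, min (1 / ((k : ℝ) + 1)) (1 / (((k : ℝ) + 1) ^ 2 * p)) :=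
        (hlambert.sub hbasel).norm_le_of_bounded (summable_min_one_div_succ hp).hasSum
          fun k => abs_lambert_term_sub_le hp (by linarith) k
    _ ≤ 3 * (1 + log (1 / p)) := tsum_min_one_div_succ_le_of_le_half hp hp2

end
end

section
/- There exist constants C > 0 and d₀ > 0 such that for every d ≥ d₀, the differential entropy H(ρ_d) = −∫_ℝ ρ_d(x) log ρ_d(x) dx satisfies |H(ρ_d) − π²/(3d)| ≤ C/d². -/
/-!
Rescaling, `ρ_d(x) = φ(d x)` with `φ(t) = σ(t) - σ(t - d) = (1 - e^{-d}) σ(t) σ(d - t)`, where `σ`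
is the logistic sigmoid, so `log φ(t) = log (1 - e^{-d}) - softplus(-t) - softplus(t - d)`.
As `∫ φ = d` and `φ` is symmetric about `d / 2`,
`H(ρ_d) = -log (1 - e^{-d}) + (2 / d) ∫ φ(t) softplus(-t) dt`. Replacing `φ` by `σ` costs the tail
`∫ σ(t - d) softplus(-t) dt = O(e^{-d/2})`, and the substitution `s = softplus(-t)` turns
`∫ σ(t) softplus(-t) dt` into the Bose integral `∫₀^∞ s / (e^s - 1) ds = ζ(2) = π² / 6`.
Every integrability statement rests on `σ(t) e^{-t/2} = 1 / (2 cosh (t / 2)) ≤ 8 / (1 + t²)`.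
-/

open MeasureTheory

noncomputable section

/-- The logistic-profile density `ρ_d`. -/
def rho (d : ℝ) (x : ℝ) : ℝ :=
  (1 - Real.exp (-d)) / ((1 + Real.exp (-d * x)) * (1 + Real.exp (d * (x - 1))))

open Real Filter Set Topology

lemma sigmoid_le_exp_half (t : ℝ) : sigmoid t ≤ exp (t / 2) := by
  have hu := exp_pos (-(t / 2))
  rw [sigmoid_def, inv_le_comm₀ (by positivity) (by positivity), ← exp_neg,
    show exp (-t) = exp (-(t / 2)) ^ 2 by rw [← exp_nat_mul]; ring_nf]
  nlinarith

lemma two_add_sq_div_eight_le (t : ℝ) : 2 + t ^ 2 / 8 ≤ exp (t / 2) + exp (-(t / 2)) := by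
  rcases le_total 0 t with h | h
  · nlinarith [quadratic_le_exp_of_nonneg (by linarith : 0 ≤ t / 2), add_one_le_exp (-(t / 2))]
  · nlinarith [quadratic_le_exp_of_nonneg (by linarith : 0 ≤ -(t / 2)), add_one_le_exp (t / 2)]

lemma sigmoid_mul_exp_neg_half (t : ℝ) :
    sigmoid t * exp (-(t / 2)) = (exp (t / 2) + exp (-(t / 2)))⁻¹ := by
  rw [sigmoid_def, show -t = -(t / 2) + -(t / 2) by ring, exp_add, exp_neg]
  field_simp

lemma sigmoid_mul_exp_neg_half_le (t : ℝ) : sigmoid t * exp (-(t / 2)) ≤ 8 * (1 + t ^ 2)⁻¹ := by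
  calc sigmoid t * exp (-(t / 2)) = (exp (t / 2) + exp (-(t / 2)))⁻¹ := sigmoid_mul_exp_neg_half t
    _ ≤ ((1 + t ^ 2) / 8)⁻¹ := by
        gcongr
        linarith [two_add_sq_div_eight_le t]
    _ = 8 * (1 + t ^ 2)⁻¹ := by rw [inv_div, div_eq_mul_inv]

def softplus (t : ℝ) : ℝ := log (1 + exp t)

lemma exp_softplus (t : ℝ) : exp (softplus t) = 1 + exp t :=
  exp_log (by positivity)

lemma softplus_pos (t : ℝ) : 0 < softplus t :=
  log_pos (by linarith [exp_pos t])

lemma log_sigmoid (t : ℝ) : log (sigmoid t) = -softplus (-t) := by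
  rw [sigmoid_def, log_inv, softplus]

lemma softplus_sub_softplus_neg (t : ℝ) : softplus t - softplus (-t) = t := by
  rw [softplus, softplus, ← log_div (by positivity) (by positivity),
    show 1 + exp t = exp t * (1 + exp (-t)) by rw [mul_add, ← exp_add]; simp [add_comm],
    mul_div_cancel_right₀ _ (by positivity), log_exp]

lemma hasDerivAt_softplus (t : ℝ) : HasDerivAt softplus (sigmoid t) t := by
  refine (((hasDerivAt_exp t).const_add 1).log (by positivity)).congr_deriv ?_
  rw [sigmoid_def, exp_neg]
  field_simp
  ring

@[fun_prop]
lemma continuous_softplus : Continuous softplus :=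
  continuous_iff_continuousAt.2 fun t => (hasDerivAt_softplus t).continuousAt

lemma strictMono_softplus : StrictMono softplus := fun _ _ h =>
  log_lt_log (by positivity) (by simpa using h)

lemma image_softplus_univ : softplus '' univ = Ioi 0 := by
  refine Subset.antisymm (by rintro _ ⟨t, -, rfl⟩; exact softplus_pos t) fun s (hs : 0 < s) => ?_
  have : 0 < exp s - 1 := by linarith [add_one_lt_exp hs.ne']
  exact ⟨log (exp s - 1), trivial, by rw [softplus, exp_log this, add_sub_cancel, log_exp]⟩

lemma tendsto_softplus_atBot : Tendsto softplus atBot (𝓝 0) := by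
  have h : Tendsto (fun t => 1 + exp t) atBot (𝓝 1) := by
    simpa using tendsto_exp_atBot.const_add 1
  have := (continuousAt_log one_ne_zero).tendsto.comp h
  rwa [log_one] at this

lemma softplus_le_two_mul_exp_half (t : ℝ) : softplus t ≤ 2 * exp (t / 2) := by
  have hu := exp_pos (t / 2)
  have h : 1 + exp t ≤ exp (2 * exp (t / 2)) := by
    have := quadratic_le_exp_of_nonneg (by positivity : 0 ≤ 2 * exp (t / 2))
    rw [show exp t = exp (t / 2) ^ 2 by rw [← exp_nat_mul]; ring_nf]
    nlinarith
  simpa [softplus] using log_le_log (by positivity) h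

lemma hasSum_one_div_nat_add_one_sq :
    HasSum (fun n : ℕ => 1 / ((n : ℝ) + 1) ^ 2) (π ^ 2 / 6) := by
  simpa using (hasSum_nat_add_iff' 1).2 hasSum_zeta_two

lemma integral_mul_exp_neg_mul_Ioi {r : ℝ} (hr : 0 < r) :
    ∫ s in Ioi 0, s * exp (-(r * s)) = 1 / r ^ 2 := by
  have := integral_rpow_mul_exp_neg_mul_Ioi two_pos hr
  norm_num [Gamma_two] at this
  simpa using this

lemma hasSum_mul_exp_neg_mul_succ {s : ℝ} (hs : 0 < s) :
    HasSum (fun n : ℕ => s * exp (-((n + 1) * s))) (s / (exp s - 1)) := by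
  have hq : exp (-s) < 1 := exp_lt_one_iff.2 (neg_lt_zero.2 hs)
  have h := (hasSum_geometric_of_lt_one (exp_pos _).le hq).mul_left (s * exp (-s))
  have hs' : 1 < exp s := one_lt_exp_iff.2 hs
  rw [show s * exp (-s) * (1 - exp (-s))⁻¹ = s / (exp s - 1) by rw [exp_neg]; field_simp] at h
  refine h.congr_fun fun n => ?_
  rw [mul_assoc, ← exp_nat_mul, ← exp_add]
  ring_nf

theorem integral_div_exp_sub_one_Ioi : ∫ s in Ioi 0, s / (exp s - 1) = π ^ 2 / 6 := by
  set F : ℕ → ℝ → ℝ := fun n s => s * exp (-((n + 1) * s))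
  have hF : ∀ n : ℕ, ∫ s in Ioi 0, F n s = 1 / ((n : ℝ) + 1) ^ 2 := fun n =>
    integral_mul_exp_neg_mul_Ioi (by positivity)
  have hF_int : ∀ n : ℕ, Integrable (F n) (volume.restrict (Ioi 0)) := fun n =>
    .of_integral_ne_zero (by rw [hF]; positivity)
  have hF_norm : ∀ n : ℕ, ∫ s in Ioi 0, ‖F n s‖ = 1 / ((n : ℝ) + 1) ^ 2 := fun n => by
    rw [← hF]
    refine setIntegral_congr_fun measurableSet_Ioi fun s (hs : 0 < s) => ?_
    exact norm_of_nonneg (by positivity)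
  calc ∫ s in Ioi 0, s / (exp s - 1) = ∫ s in Ioi 0, ∑' n, F n s :=
        setIntegral_congr_fun measurableSet_Ioi fun s hs =>
          (hasSum_mul_exp_neg_mul_succ hs).tsum_eq.symm
    _ = ∑' n, ∫ s in Ioi 0, F n s :=
        (integral_tsum_of_summable_integral_norm hF_int
          (by simpa only [hF_norm] using hasSum_one_div_nat_add_one_sq.summable)).symm
    _ = π ^ 2 / 6 := by simpa only [hF] using hasSum_one_div_nat_add_one_sq.tsum_eq

theorem integral_sigmoid_neg_mul_softplus : ∫ t, sigmoid (-t) * softplus t = π ^ 2 / 6 := by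
  have key := integral_image_eq_integral_abs_deriv_smul MeasurableSet.univ
    (fun t _ => (hasDerivAt_softplus t).hasDerivWithinAt) strictMono_softplus.injective.injOn
    (fun s => s / (exp s - 1))
  rw [image_softplus_univ, integral_div_exp_sub_one_Ioi, Measure.restrict_univ] at key
  rw [key]
  -- `ds = σ(t) dt` and `σ(-t) / σ(t) = e^{-t} = 1 / (e^s - 1)`
  congr 1 with t
  rw [abs_of_pos (sigmoid_pos t), smul_eq_mul, exp_softplus, add_sub_cancel_left,
    ← sigmoid_mul_rexp_neg, exp_neg]
  field_simp

theorem integral_sigmoid_mul_softplus_neg : ∫ t, sigmoid t * softplus (-t) = π ^ 2 / 6 := by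
  rw [← integral_sigmoid_neg_mul_softplus, ← integral_neg_eq_self]
  simp only [neg_neg]

lemma sigmoid_sub_mul_softplus_neg_le (d t : ℝ) :
    sigmoid (t - d) * softplus (-t) ≤ 16 * exp (-(d / 2)) * (1 + (t - d) ^ 2)⁻¹ := by
  have h : softplus (-t) ≤ 2 * exp (-(d / 2)) * exp (-((t - d) / 2)) := by
    rw [mul_assoc, ← exp_add]
    convert softplus_le_two_mul_exp_half (-t) using 3
    ring
  calc sigmoid (t - d) * softplus (-t)
      ≤ sigmoid (t - d) * (2 * exp (-(d / 2)) * exp (-((t - d) / 2))) := by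
        gcongr; exact (sigmoid_pos _).le
    _ = 2 * exp (-(d / 2)) * (sigmoid (t - d) * exp (-((t - d) / 2))) := by ring
    _ ≤ 2 * exp (-(d / 2)) * (8 * (1 + (t - d) ^ 2)⁻¹) :=
        mul_le_mul_of_nonneg_left (sigmoid_mul_exp_neg_half_le _) (by positivity)
    _ = 16 * exp (-(d / 2)) * (1 + (t - d) ^ 2)⁻¹ := by ring

lemma integrable_sigmoid_sub_mul_softplus_neg (d : ℝ) :
    Integrable fun t => sigmoid (t - d) * softplus (-t) := by
  refine ((integrable_inv_one_add_sq.comp_sub_right d).const_mul (16 * exp (-(d / 2)))).mono'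
    (by fun_prop : Continuous _).aestronglyMeasurable (ae_of_all _ fun t => ?_)
  rw [norm_of_nonneg (mul_nonneg (sigmoid_pos _).le (softplus_pos _).le)]
  exact sigmoid_sub_mul_softplus_neg_le d t

lemma integrable_sigmoid_mul_softplus_neg : Integrable fun t => sigmoid t * softplus (-t) := by
  simpa using integrable_sigmoid_sub_mul_softplus_neg 0

lemma integral_sigmoid_sub_mul_softplus_neg_le (d : ℝ) :
    ∫ t, sigmoid (t - d) * softplus (-t) ≤ 16 * π * exp (-(d / 2)) := by
  calc ∫ t, sigmoid (t - d) * softplus (-t)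
      ≤ ∫ t, 16 * exp (-(d / 2)) * (1 + (t - d) ^ 2)⁻¹ :=
        integral_mono (integrable_sigmoid_sub_mul_softplus_neg d)
          ((integrable_inv_one_add_sq.comp_sub_right d).const_mul _)
          (sigmoid_sub_mul_softplus_neg_le d)
    _ = 16 * π * exp (-(d / 2)) := by
        rw [integral_const_mul, integral_sub_right_eq_self (fun t => (1 + t ^ 2)⁻¹),
          integral_univ_inv_one_add_sq]
        ring

def logisticProfile (d t : ℝ) : ℝ := sigmoid t - sigmoid (t - d)

lemma logisticProfile_eq_mul (d t : ℝ) :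
    logisticProfile d t = (1 - exp (-d)) * (sigmoid t * sigmoid (d - t)) := by
  simp only [logisticProfile, sigmoid_def, neg_sub, exp_sub, exp_neg]
  field_simp
  ring

lemma rho_eq_logisticProfile (d x : ℝ) : rho d x = logisticProfile d (d * x) := by
  rw [logisticProfile_eq_mul, rho, sigmoid_def, sigmoid_def, div_eq_mul_inv, mul_inv]
  ring_nf

lemma logisticProfile_sub (d t : ℝ) : logisticProfile d (d - t) = logisticProfile d t := by
  rw [logisticProfile_eq_mul, logisticProfile_eq_mul, sub_sub_cancel, mul_comm (sigmoid t)]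

lemma log_logisticProfile {d : ℝ} (hd : 0 < d) (t : ℝ) :
    log (logisticProfile d t) = log (1 - exp (-d)) - softplus (-t) - softplus (t - d) := by
  have h : 0 < 1 - exp (-d) := sub_pos.2 (exp_lt_one_iff.2 (neg_lt_zero.2 hd))
  rw [logisticProfile_eq_mul, log_mul h.ne' (mul_pos (sigmoid_pos _) (sigmoid_pos _)).ne',
    log_mul (sigmoid_pos t).ne' (sigmoid_pos _).ne', log_sigmoid, log_sigmoid, neg_sub]
  ring

lemma abs_logisticProfile_le (d t : ℝ) :
    |logisticProfile d t| ≤ |1 - exp (-d)| * exp (d / 2) * (8 * (1 + t ^ 2)⁻¹) := by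
  rw [logisticProfile_eq_mul, abs_mul, abs_of_pos (mul_pos (sigmoid_pos t) (sigmoid_pos _)),
    mul_assoc]
  refine mul_le_mul_of_nonneg_left ?_ (abs_nonneg _)
  calc sigmoid t * sigmoid (d - t) ≤ sigmoid t * exp ((d - t) / 2) :=
        mul_le_mul_of_nonneg_left (sigmoid_le_exp_half _) (sigmoid_pos t).le
    _ = exp (d / 2) * (sigmoid t * exp (-(t / 2))) := by
        rw [mul_left_comm, ← exp_add]; ring_nf
    _ ≤ exp (d / 2) * (8 * (1 + t ^ 2)⁻¹) :=
        mul_le_mul_of_nonneg_left (sigmoid_mul_exp_neg_half_le t) (exp_pos _).le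

lemma integrable_logisticProfile (d : ℝ) : Integrable (logisticProfile d) :=
  (integrable_inv_one_add_sq.const_mul 8 |>.const_mul _).mono'
    (by unfold logisticProfile; fun_prop : Continuous _).aestronglyMeasurable
    (ae_of_all _ fun t => abs_logisticProfile_le d t)

lemma integral_logisticProfile (d : ℝ) : ∫ t, logisticProfile d t = d := by
  have hderiv (t : ℝ) :
      HasDerivAt (fun t => softplus t - softplus (t - d)) (logisticProfile d t) t :=
    (hasDerivAt_softplus t).sub ((hasDerivAt_softplus (t - d)).comp_sub_const t d)
  have hbot : Tendsto (fun t => softplus t - softplus (t - d)) atBot (𝓝 (0 - 0)) :=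
    tendsto_softplus_atBot.sub
      (tendsto_softplus_atBot.comp (tendsto_atBot_add_const_right _ (-d) tendsto_id))
  have htop : Tendsto (fun t => softplus t - softplus (t - d)) atTop (𝓝 (d + 0 - 0)) := by
    have h₁ := tendsto_softplus_atBot.comp (tendsto_neg_atTop_atBot (G := ℝ))
    have h₂ := h₁.comp (tendsto_atTop_add_const_right atTop (-d) tendsto_id)
    refine (h₁.const_add d).sub h₂ |>.congr fun t => ?_
    simp only [Function.comp_apply, id, ← sub_eq_add_neg]
    linarith [softplus_sub_softplus_neg t, softplus_sub_softplus_neg (t - d)]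
  simpa using integral_of_hasDerivAt_of_tendsto hderiv (integrable_logisticProfile d) hbot htop

lemma integrable_logisticProfile_mul_softplus_neg (d : ℝ) :
    Integrable fun t => logisticProfile d t * softplus (-t) := by
  refine (integrable_sigmoid_mul_softplus_neg.sub (integrable_sigmoid_sub_mul_softplus_neg d)).congr
    (ae_of_all _ fun t => ?_)
  simp only [Pi.sub_apply, logisticProfile, sub_mul]

lemma integral_logisticProfile_mul_softplus_neg (d : ℝ) :
    ∫ t, logisticProfile d t * softplus (-t)
      = π ^ 2 / 6 - ∫ t, sigmoid (t - d) * softplus (-t) := by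
  simp only [logisticProfile, sub_mul]
  rw [integral_sub integrable_sigmoid_mul_softplus_neg (integrable_sigmoid_sub_mul_softplus_neg d),
    integral_sigmoid_mul_softplus_neg]

lemma integral_logisticProfile_mul_softplus_sub (d : ℝ) :
    ∫ t, logisticProfile d t * softplus (t - d) = ∫ t, logisticProfile d t * softplus (-t) := by
  rw [← integral_sub_left_eq_self (fun t => logisticProfile d t * softplus (-t)) volume d]
  simp only [logisticProfile_sub, neg_sub]

lemma integral_logisticProfile_mul_log {d : ℝ} (hd : 0 < d) :
    ∫ t, logisticProfile d t * log (logisticProfile d t)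
      = d * log (1 - exp (-d)) - 2 * (π ^ 2 / 6 - ∫ t, sigmoid (t - d) * softplus (-t)) := by
  have hA := integrable_logisticProfile_mul_softplus_neg d
  have hc : Integrable fun t => log (1 - exp (-d)) * logisticProfile d t :=
    (integrable_logisticProfile d).const_mul _
  have hcA : Integrable fun t =>
      log (1 - exp (-d)) * logisticProfile d t - logisticProfile d t * softplus (-t) :=
    hc.sub hA
  have hB : Integrable fun t => logisticProfile d t * softplus (t - d) := by
    simpa only [logisticProfile_sub, neg_sub] using hA.comp_sub_left d
  calc ∫ t, logisticProfile d t * log (logisticProfile d t)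
      = ∫ t, (log (1 - exp (-d)) * logisticProfile d t - logisticProfile d t * softplus (-t))
          - logisticProfile d t * softplus (t - d) := by
        congr 1 with t
        rw [log_logisticProfile hd]
        ring
    _ = d * log (1 - exp (-d)) - 2 * (π ^ 2 / 6 - ∫ t, sigmoid (t - d) * softplus (-t)) := by
        rw [integral_sub hcA hB, integral_sub hc hA,
          integral_const_mul, integral_logisticProfile, integral_logisticProfile_mul_softplus_sub,
          integral_logisticProfile_mul_softplus_neg]
        ring

theorem entropy_rho {d : ℝ} (hd : 0 < d) :
    -∫ x, rho d x * log (rho d x)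
      = π ^ 2 / (3 * d) - log (1 - exp (-d)) - 2 / d * ∫ t, sigmoid (t - d) * softplus (-t) := by
  simp_rw [rho_eq_logisticProfile]
  rw [Measure.integral_comp_mul_left (fun t => logisticProfile d t * log (logisticProfile d t)),
    integral_logisticProfile_mul_log hd, abs_inv, abs_of_pos hd, smul_eq_mul]
  field_simp
  ring

lemma abs_log_one_sub_exp_neg_le {d : ℝ} (hd : 0 < d) : |log (1 - exp (-d))| ≤ 2 / d ^ 2 := by
  have h₀ : 0 < 1 - exp (-d) := sub_pos.2 (exp_lt_one_iff.2 (neg_lt_zero.2 hd))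
  have hlow := one_sub_inv_le_log_of_pos h₀
  have hinv : (1 - exp (-d))⁻¹ - 1 = (exp d - 1)⁻¹ := by
    have : exp d - 1 ≠ 0 := by linarith [one_lt_exp_iff.2 hd]
    rw [exp_neg]
    field_simp
    ring
  have hexp : d ^ 2 / 2 ≤ exp d - 1 := by nlinarith [quadratic_le_exp_of_nonneg hd.le]
  rw [abs_of_nonpos (log_nonpos h₀.le (by linarith [exp_pos (-d)]))]
  calc -log (1 - exp (-d)) ≤ (exp d - 1)⁻¹ := by linarith
    _ ≤ (d ^ 2 / 2)⁻¹ := inv_anti₀ (by positivity) hexp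
    _ = 2 / d ^ 2 := inv_div _ _

lemma exp_neg_half_le {d : ℝ} (hd : 0 < d) : exp (-(d / 2)) ≤ 2 / d := by
  rw [exp_neg, inv_le_comm₀ (exp_pos _) (by positivity), inv_div]
  linarith [add_one_le_exp (d / 2)]

/-- Entropy asymptotics of the logistic profile:
`H(ρ_d) = π²/(3d) + O(d⁻²)`. -/
theorem stmt_7 :
    ∃ C : ℝ, 0 < C ∧ ∃ d₀ : ℝ, 0 < d₀ ∧
      ∀ d : ℝ, d₀ ≤ d →
        |(-∫ x : ℝ, rho d x * Real.log (rho d x)) - Real.pi ^ 2 / (3 * d)| ≤ C / d ^ 2 := by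
  refine ⟨2 + 64 * π, by positivity, 1, one_pos, fun d hd => ?_⟩
  have hd₀ : 0 < d := one_pos.trans_le hd
  set E := ∫ t, sigmoid (t - d) * softplus (-t)
  have hE₀ : 0 ≤ E :=
    integral_nonneg fun t => mul_nonneg (sigmoid_pos _).le (softplus_pos _).le
  have hE : E ≤ 32 * π / d := calc
    E ≤ 16 * π * exp (-(d / 2)) := integral_sigmoid_sub_mul_softplus_neg_le d
    _ ≤ 16 * π * (2 / d) := by gcongr; exact exp_neg_half_le hd₀
    _ = 32 * π / d := by ring
  rw [entropy_rho hd₀]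
  calc |π ^ 2 / (3 * d) - log (1 - exp (-d)) - 2 / d * E - π ^ 2 / (3 * d)|
      = |log (1 - exp (-d)) + 2 / d * E| := by rw [← abs_neg]; ring_nf
    _ ≤ |log (1 - exp (-d))| + 2 / d * E := by
        refine (abs_add_le _ _).trans_eq ?_
        rw [abs_of_nonneg (mul_nonneg (by positivity) hE₀)]
    _ ≤ 2 / d ^ 2 + 2 / d * (32 * π / d) := by
        gcongr; exact abs_log_one_sub_exp_neg_le hd₀
    _ = (2 + 64 * π) / d ^ 2 := by ring

end
end

section
/- There exist constants C > 0 and d₀ > 0 such that for every d ≥ d₀, the quantity Q(ρ_d) = ∬_{|x−y|>1} ρ_d(x) ρ_d(y) dx dy satisfies |Q(ρ_d) − π²/(3d²)| ≤ C/d³. -/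
/-!
Writing `F` for the distribution function of `ρ_d`, the symmetry `|x - y| = |y - x|` and
Fubini give `Q(ρ_d) = 2 ∫ ρ_d(x) F(x - 1) dx`, where `F` is explicit in terms of
`softplus t = log (1 + eᵗ)`. The substitution `x = 1 + s / d` turns this into `(2 / d²) ∫ G_d`
with `G_d(s) = d ρ_d(1 + s/d) F(s/d)`, and `0 ≤ softplus s / (1 + eˢ) - G_d(s)` is at most
`e^{-d/2}` times an integrable envelope. Finally, substituting `t = softplus s` and expanding
`t / (eᵗ - 1) = ∑ t e^{-(n+1)t}` gives
`∫ softplus s / (1 + eˢ) ds = ∑ 1 / (n+1)² = π² / 6`.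
So the error is in fact exponentially small in `d`.
-/

open MeasureTheory

noncomputable section

open Real Set Filter Topology

namespace LogisticProfile

def softplus (t : ℝ) : ℝ := log (1 + exp t)

@[fun_prop]
lemma continuous_softplus : Continuous softplus :=
  (continuous_const.add continuous_exp).log fun t => (add_pos one_pos (exp_pos t)).ne'

lemma hasDerivAt_softplus (t : ℝ) : HasDerivAt softplus (exp t / (1 + exp t)) t :=
  ((hasDerivAt_exp t).const_add 1).log (by positivity)

lemma softplus_pos (t : ℝ) : 0 < softplus t :=
  log_pos (by linarith [exp_pos t])

lemma exp_softplus (t : ℝ) : exp (softplus t) = 1 + exp t := exp_log (by positivity)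

lemma strictMono_softplus : StrictMono softplus := fun _ _ h =>
  log_lt_log (by positivity) (by gcongr)

lemma range_softplus : range softplus = Ioi 0 := by
  refine Subset.antisymm (range_subset_iff.2 softplus_pos) fun t (ht : 0 < t) => ?_
  have h : 0 < exp t - 1 := by linarith [add_one_lt_exp ht.ne']
  refine ⟨log (exp t - 1), ?_⟩
  rw [softplus, exp_log h, add_sub_cancel, log_exp]

lemma softplus_le_exp (t : ℝ) : softplus t ≤ exp t :=
  (log_le_sub_one_of_pos (by positivity)).trans_eq (add_sub_cancel_left 1 _)

lemma softplus_le_two_mul_exp_half (t : ℝ) : softplus t ≤ 2 * exp (t / 2) := by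
  have hsq : exp t = exp (t / 2) ^ 2 := by rw [← exp_nat_mul]; ring_nf
  calc softplus t ≤ log ((1 + exp (t / 2)) ^ 2) :=
        log_le_log (by positivity) (by nlinarith [exp_pos (t / 2)])
    _ = 2 * softplus (t / 2) := by rw [log_pow]; norm_num [softplus]
    _ ≤ 2 * exp (t / 2) := by gcongr; exact softplus_le_exp _

lemma tendsto_softplus_atBot : Tendsto softplus atBot (𝓝 0) := by
  show Tendsto (fun t => log (1 + exp t)) atBot (𝓝 0)
  simpa using (tendsto_exp_atBot.const_add 1).log (by norm_num)

lemma exp_half_div_one_add_exp_le (t : ℝ) : exp (t / 2) / (1 + exp t) ≤ exp (-|t| / 2) := by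
  rw [div_le_iff₀ (by positivity)]
  rcases le_total t 0 with ht | ht
  · rw [abs_of_nonpos ht, neg_neg]
    nlinarith [exp_pos (t / 2), exp_pos t]
  · have h : exp (-|t| / 2) * exp t = exp (t / 2) := by
      rw [abs_of_nonneg ht, ← exp_add]; ring_nf
    nlinarith [exp_pos (-|t| / 2)]

lemma softplus_div_one_add_exp_le (a b : ℝ) :
    softplus a / (1 + exp b) ≤ 2 * exp ((a - b) / 2) * exp (-|b| / 2) := by
  have h : exp (a / 2) = exp ((a - b) / 2) * exp (b / 2) := by rw [← exp_add]; ring_nf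
  calc softplus a / (1 + exp b) ≤ 2 * exp (a / 2) / (1 + exp b) := by
        gcongr; exact softplus_le_two_mul_exp_half a
    _ = 2 * exp ((a - b) / 2) * (exp (b / 2) / (1 + exp b)) := by rw [h]; ring
    _ ≤ 2 * exp ((a - b) / 2) * exp (-|b| / 2) := by gcongr; exact exp_half_div_one_add_exp_le b

lemma integral_exp_neg_mul_abs {b : ℝ} (hb : 0 < b) : ∫ x, exp (-b * |x|) = 2 / b := by
  rw [integral_comp_abs (f := fun x => exp (-b * x)), integral_exp_mul_Ioi (by linarith) 0]
  simp; ring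

lemma integrable_exp_neg_mul_abs {b : ℝ} (hb : 0 < b) :
    Integrable fun x : ℝ => exp (-b * |x|) :=
  .of_integral_ne_zero (by rw [integral_exp_neg_mul_abs hb]; positivity)

lemma integral_exp_neg_abs_div_two : ∫ x, exp (-|x| / 2) = 4 := by
  have h := integral_exp_neg_mul_abs (b := 1 / 2) (by norm_num)
  norm_num at h
  convert h using 4 with x
  ring

lemma integrable_exp_neg_abs_div_two : Integrable fun x : ℝ => exp (-|x| / 2) :=
  .of_integral_ne_zero (by rw [integral_exp_neg_abs_div_two]; norm_num)

lemma integral_Ioi_mul_exp_neg_mul {a : ℝ} (ha : 0 < a) :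
    ∫ t in Ioi 0, t * exp (-(a * t)) = 1 / a ^ 2 := by
  have h := integral_rpow_mul_exp_neg_mul_Ioi two_pos ha
  norm_num [Gamma_two] at h
  rw [h, one_div]

lemma integrableOn_mul_exp_neg_mul {a : ℝ} (ha : 0 < a) :
    IntegrableOn (fun t => t * exp (-(a * t))) (Ioi 0) :=
  .of_integral_ne_zero (by rw [integral_Ioi_mul_exp_neg_mul ha]; positivity)

lemma hasSum_mul_exp_neg_mul {t : ℝ} (ht : 0 < t) :
    HasSum (fun n : ℕ => t * exp (-((n + 1) * t))) (t / (exp t - 1)) := by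
  have hq : exp (-t) < 1 := exp_lt_one_iff.2 (by linarith)
  have h := (hasSum_geometric_of_lt_one (exp_pos _).le hq).mul_left (t * exp (-t))
  have h1 : exp t - 1 ≠ 0 := by linarith [add_one_lt_exp ht.ne']
  rw [show t * exp (-t) * (1 - exp (-t))⁻¹ = t / (exp t - 1) by rw [exp_neg]; field_simp] at h
  refine h.congr_fun fun n => ?_
  rw [← exp_nat_mul, mul_assoc, ← exp_add]
  ring_nf

lemma hasSum_one_div_nat_add_one_sq :
    HasSum (fun n : ℕ => 1 / ((n : ℝ) + 1) ^ 2) (π ^ 2 / 6) := by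
  simpa using (hasSum_nat_add_iff' 1).2 hasSum_zeta_two

lemma integral_Ioi_div_exp_sub_one : ∫ t in Ioi 0, t / (exp t - 1) = π ^ 2 / 6 := by
  have hn (n : ℕ) : (0 : ℝ) < n + 1 := by positivity
  have hterm (n : ℕ) :
      ∫ t in Ioi 0, ‖t * exp (-((n + 1) * t))‖ = 1 / ((n : ℝ) + 1) ^ 2 := by
    rw [← integral_Ioi_mul_exp_neg_mul (hn n)]
    refine setIntegral_congr_fun measurableSet_Ioi fun t (ht : 0 < t) => ?_
    exact norm_of_nonneg (by positivity)
  have hF := hasSum_integral_of_summable_integral_norm (μ := volume.restrict (Ioi 0))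
    (F := fun (n : ℕ) t => t * exp (-((n + 1) * t)))
    (fun n => integrableOn_mul_exp_neg_mul (hn n))
    (by simpa only [hterm] using hasSum_one_div_nat_add_one_sq.summable)
  simp only [integral_Ioi_mul_exp_neg_mul (hn _)] at hF
  rw [setIntegral_congr_fun measurableSet_Ioi fun t ht => (hasSum_mul_exp_neg_mul ht).tsum_eq]
    at hF
  exact hF.unique hasSum_one_div_nat_add_one_sq

def limitIntegrand (s : ℝ) : ℝ := softplus s / (1 + exp s)

lemma integral_limitIntegrand : ∫ s, limitIntegrand s = π ^ 2 / 6 := by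
  have h := integral_image_eq_integral_abs_deriv_smul MeasurableSet.univ
    (fun s _ => (hasDerivAt_softplus s).hasDerivWithinAt) strictMono_softplus.injective.injOn
    (fun t => t / (exp t - 1))
  rw [image_univ, range_softplus, integral_Ioi_div_exp_sub_one, Measure.restrict_univ] at h
  rw [h]
  congr 1 with s
  rw [limitIntegrand, exp_softplus, add_sub_cancel_left, smul_eq_mul, abs_of_pos (by positivity)]
  field_simp

lemma limitIntegrand_le (s : ℝ) : limitIntegrand s ≤ 2 * exp (-|s| / 2) := by
  simpa [limitIntegrand] using softplus_div_one_add_exp_le s s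

@[fun_prop]
lemma continuous_limitIntegrand : Continuous limitIntegrand := by
  unfold limitIntegrand
  fun_prop (disch := intros; positivity)

lemma integrable_limitIntegrand : Integrable limitIntegrand := by
  refine (integrable_exp_neg_abs_div_two.const_mul 2).mono'
    continuous_limitIntegrand.aestronglyMeasurable (Eventually.of_forall fun s => ?_)
  rw [norm_of_nonneg (by unfold limitIntegrand; have := softplus_pos s; positivity)]
  exact limitIntegrand_le s

lemma setIntegral_lt_sub_mul {f g : ℝ → ℝ} (hf : Integrable f) (hg : Integrable g) (a : ℝ) :
    ∫ p in {p : ℝ × ℝ | a < p.1 - p.2}, f p.1 * g p.2 =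
      ∫ x, f x * ∫ y in Iio (x - a), g y := by
  have hS : MeasurableSet {p : ℝ × ℝ | a < p.1 - p.2} :=
    measurableSet_lt measurable_const (measurable_fst.sub measurable_snd)
  rw [← integral_indicator hS, Measure.volume_eq_prod,
    integral_prod _ ((hf.mul_prod hg).indicator hS)]
  congr 1 with x
  rw [← integral_const_mul, ← integral_indicator measurableSet_Iio]
  congr 1 with y
  simp only [indicator, mem_ofPred_eq, mem_Iio, lt_sub_comm]

lemma setIntegral_lt_abs_sub_mul {f : ℝ → ℝ} (hf : Integrable f) {a : ℝ} (ha : 0 ≤ a) :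
    ∫ p in {p : ℝ × ℝ | a < |p.1 - p.2|}, f p.1 * f p.2 =
      2 * ∫ x, f x * ∫ y in Iio (x - a), f y := by
  set S := {p : ℝ × ℝ | a < p.1 - p.2}
  have hS : MeasurableSet S :=
    measurableSet_lt measurable_const (measurable_fst.sub measurable_snd)
  have hff : Integrable (fun p : ℝ × ℝ => f p.1 * f p.2) := by
    rw [Measure.volume_eq_prod]; exact hf.mul_prod hf
  have hsplit : {p : ℝ × ℝ | a < |p.1 - p.2|} = S ∪ Prod.swap ⁻¹' S := by
    ext p; simp [S, lt_abs]
  have hdisj : Disjoint S (Prod.swap ⁻¹' S) :=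
    Set.disjoint_left.2 fun p h₁ h₂ => by
      simp only [S, mem_preimage, mem_ofPred_eq, Prod.fst_swap, Prod.snd_swap] at h₁ h₂
      linarith
  have hswap : ∫ p in Prod.swap ⁻¹' S, f p.1 * f p.2 = ∫ p in S, f p.1 * f p.2 := by
    have h := (Measure.measurePreserving_swap (μ := volume) (ν := volume)
      ).setIntegral_preimage_emb MeasurableEquiv.prodComm.measurableEmbedding
        (fun p : ℝ × ℝ => f p.1 * f p.2) S
    simp only [Prod.fst_swap, Prod.snd_swap, ← Measure.volume_eq_prod] at h
    rw [← h]
    exact integral_congr_ae (Eventually.of_forall fun p => mul_comm _ _)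
  rw [hsplit, setIntegral_union hdisj (measurable_swap hS) hff.integrableOn hff.integrableOn,
    hswap, setIntegral_lt_sub_mul hf hf]
  ring

lemma rho_nonneg {d : ℝ} (hd : 0 ≤ d) (x : ℝ) : 0 ≤ rho d x :=
  div_nonneg (sub_nonneg.2 (exp_le_one_iff.2 (by linarith))) (by positivity)

lemma continuous_rho (d : ℝ) : Continuous (rho d) := by
  unfold rho
  fun_prop (disch := intros; positivity)

lemma rho_le_exp_neg_mul_abs {d : ℝ} (hd : 0 ≤ d) (x : ℝ) :
    rho d x ≤ exp d * exp (-d * |x|) := by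
  have hnum : 1 - exp (-d) ≤ 1 := by linarith [exp_pos (-d)]
  have h₁ : rho d x ≤ exp (d * x) := by
    rw [← inv_inv (exp (d * x)), ← exp_neg, ← one_div, rho, neg_mul]
    exact div_le_div₀ zero_le_one hnum (exp_pos _)
      (by nlinarith [exp_pos (-(d * x)), exp_pos (d * (x - 1))])
  have h₂ : rho d x ≤ exp d * exp (-d * x) := by
    rw [← exp_add, show d + -d * x = -(d * (x - 1)) by ring, exp_neg, ← one_div, rho]
    exact div_le_div₀ zero_le_one hnum (exp_pos _)
      (by nlinarith [exp_pos (-d * x), exp_pos (d * (x - 1))])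
  rcases le_total x 0 with hx | hx
  · refine h₁.trans ?_
    rw [abs_of_nonpos hx, ← exp_add]
    exact exp_le_exp.2 (by nlinarith)
  · rwa [abs_of_nonneg hx]

lemma integrable_rho {d : ℝ} (hd : 0 < d) : Integrable (rho d) := by
  refine ((integrable_exp_neg_mul_abs hd).const_mul (exp d)).mono'
    (continuous_rho d).aestronglyMeasurable (Eventually.of_forall fun x => ?_)
  rw [norm_of_nonneg (rho_nonneg hd.le x)]
  exact rho_le_exp_neg_mul_abs hd.le x

def rhoCDF (d a : ℝ) : ℝ := (softplus (d * a) - softplus (d * (a - 1))) / d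

lemma hasDerivAt_rhoCDF {d : ℝ} (hd : d ≠ 0) (x : ℝ) : HasDerivAt (rhoCDF d) (rho d x) x := by
  have h₀ := (hasDerivAt_softplus (d * x)).comp x ((hasDerivAt_id x).const_mul d)
  have h₁ := (hasDerivAt_softplus (d * (x - 1))).comp x
    (((hasDerivAt_id x).sub_const 1).const_mul d)
  refine ((h₀.sub h₁).div_const d).congr_deriv ?_
  have e₁ : exp (-d * x) = (exp (d * x))⁻¹ := by rw [← exp_neg]; ring_nf
  have e₂ : exp (d * (x - 1)) = exp (d * x) * (exp d)⁻¹ := by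
    rw [← exp_neg, ← exp_add]; ring_nf
  have e₃ : exp (-d) = (exp d)⁻¹ := exp_neg d
  rw [rho, e₁, e₂, e₃]
  field_simp
  ring

lemma tendsto_rhoCDF_atBot {d : ℝ} (hd : 0 < d) : Tendsto (rhoCDF d) atBot (𝓝 0) := by
  have h₀ := tendsto_softplus_atBot.comp (tendsto_id.const_mul_atBot hd)
  have h₁ := tendsto_softplus_atBot.comp
    ((tendsto_atBot_add_const_right _ (-1) tendsto_id).const_mul_atBot hd)
  have h := (h₀.sub h₁).div_const d
  rw [sub_zero, zero_div] at h
  exact h.congr fun a => by simp [rhoCDF, sub_eq_add_neg]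

lemma integral_Iio_rho {d : ℝ} (hd : 0 < d) (a : ℝ) : ∫ y in Iio a, rho d y = rhoCDF d a := by
  rw [← integral_Iic_eq_integral_Iio, integral_Iic_of_hasDerivAt_of_tendsto'
    (fun x _ => hasDerivAt_rhoCDF hd.ne' x) (integrable_rho hd).integrableOn
    (tendsto_rhoCDF_atBot hd), sub_zero]

def rescaledIntegrand (d s : ℝ) : ℝ :=
  (1 - exp (-d)) * (softplus s - softplus (s - d)) / ((1 + exp (-(s + d))) * (1 + exp s))

lemma rho_mul_rhoCDF_div_add_one {d : ℝ} (hd : d ≠ 0) (s : ℝ) :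
    rho d (s / d + 1) * rhoCDF d (s / d + 1 - 1) = rescaledIntegrand d s / d := by
  have h₁ : -d * (s / d + 1) = -(s + d) := by field_simp
  have h₂ : d * (s / d + 1 - 1) = s := by field_simp; ring
  have h₃ : d * (s / d + 1 - 1 - 1) = s - d := by field_simp; ring
  rw [rho, rhoCDF, h₁, h₂, h₃, rescaledIntegrand]
  ring

lemma integral_rho_mul_rhoCDF {d : ℝ} (hd : 0 < d) :
    ∫ x, rho d x * rhoCDF d (x - 1) = (∫ s, rescaledIntegrand d s) / d ^ 2 := by
  have h := Measure.integral_comp_div (fun x => rho d (x + 1) * rhoCDF d (x + 1 - 1)) d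
  rw [integral_add_right_eq_self (fun x => rho d x * rhoCDF d (x - 1)) 1, abs_of_pos hd,
    smul_eq_mul] at h
  simp only [rho_mul_rhoCDF_div_add_one hd.ne', integral_div] at h
  field_simp at h ⊢
  linarith

@[fun_prop]
lemma continuous_rescaledIntegrand (d : ℝ) : Continuous (rescaledIntegrand d) := by
  unfold rescaledIntegrand
  fun_prop (disch := intros; positivity)

lemma rescaledIntegrand_nonneg {d : ℝ} (hd : 0 ≤ d) (s : ℝ) :
    0 ≤ rescaledIntegrand d s := by
  have hc : 0 ≤ 1 - exp (-d) := sub_nonneg.2 (exp_le_one_iff.2 (by linarith))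
  have hsp : 0 ≤ softplus s - softplus (s - d) :=
    sub_nonneg.2 (strictMono_softplus.monotone (by linarith))
  unfold rescaledIntegrand
  positivity

lemma limitIntegrand_sub_rescaledIntegrand (d s : ℝ) :
    limitIntegrand s - rescaledIntegrand d s =
      softplus s / (1 + exp (s + d)) +
        (1 - exp (-d)) * softplus (s - d) / ((1 + exp (-(s + d))) * (1 + exp s)) := by
  rw [limitIntegrand, rescaledIntegrand, exp_neg, exp_neg, exp_add]
  field_simp
  ring

lemma limitIntegrand_sub_rescaledIntegrand_nonneg {d : ℝ} (hd : 0 ≤ d) (s : ℝ) :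
    0 ≤ limitIntegrand s - rescaledIntegrand d s := by
  have hc : 0 ≤ 1 - exp (-d) := sub_nonneg.2 (exp_le_one_iff.2 (by linarith))
  rw [limitIntegrand_sub_rescaledIntegrand]
  have := softplus_pos s
  have := softplus_pos (s - d)
  positivity

lemma limitIntegrand_sub_rescaledIntegrand_le (d s : ℝ) :
    limitIntegrand s - rescaledIntegrand d s ≤
      2 * exp (-d / 2) * (exp (-|s + d| / 2) + exp (-|s| / 2)) := by
  have h₁ := softplus_div_one_add_exp_le s (s + d)
  have h₂ := softplus_div_one_add_exp_le (s - d) s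
  have h₃ : (1 - exp (-d)) * softplus (s - d) / ((1 + exp (-(s + d))) * (1 + exp s)) ≤
      softplus (s - d) / (1 + exp s) := by
    have hsp := (softplus_pos (s - d)).le
    refine div_le_div₀ hsp (mul_le_of_le_one_left hsp ?_) (by positivity)
      (le_mul_of_one_le_left (by positivity) ?_)
    · linarith [exp_pos (-d)]
    · linarith [exp_pos (-(s + d))]
  rw [show (s - (s + d)) / 2 = -d / 2 by ring] at h₁
  rw [show (s - d - s) / 2 = -d / 2 by ring] at h₂
  rw [limitIntegrand_sub_rescaledIntegrand]
  exact (add_le_add h₁ (h₃.trans h₂)).trans_eq (by ring)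

lemma integrable_rescaledIntegrand {d : ℝ} (hd : 0 ≤ d) : Integrable (rescaledIntegrand d) :=
  integrable_limitIntegrand.mono' (continuous_rescaledIntegrand d).aestronglyMeasurable
    (Eventually.of_forall fun s => by
      rw [norm_of_nonneg (rescaledIntegrand_nonneg hd s)]
      linarith [limitIntegrand_sub_rescaledIntegrand_nonneg hd s])

lemma abs_integral_rescaledIntegrand_sub_le {d : ℝ} (hd : 0 ≤ d) :
    |(∫ s, rescaledIntegrand d s) - π ^ 2 / 6| ≤ 16 * exp (-d / 2) := by
  have henv := integrable_exp_neg_abs_div_two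
  rw [← integral_limitIntegrand, abs_sub_comm,
    ← integral_sub integrable_limitIntegrand (integrable_rescaledIntegrand hd), ← norm_eq_abs]
  calc ‖∫ s, (limitIntegrand s - rescaledIntegrand d s)‖
      ≤ ∫ s, 2 * exp (-d / 2) * (exp (-|s + d| / 2) + exp (-|s| / 2)) := by
        refine norm_integral_le_of_norm_le (((henv.comp_add_right d).add henv).const_mul _)
          (Eventually.of_forall fun s => ?_)
        rw [norm_of_nonneg (limitIntegrand_sub_rescaledIntegrand_nonneg hd s)]
        exact limitIntegrand_sub_rescaledIntegrand_le d s
    _ = 16 * exp (-d / 2) := by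
        rw [integral_const_mul, integral_add (henv.comp_add_right d) henv,
          integral_add_right_eq_self (fun s => exp (-|s| / 2)) d, integral_exp_neg_abs_div_two]
        ring

end LogisticProfile

open LogisticProfile in
/-- Pair-violation asymptotics of the logistic profile:
`Q(ρ_d) = π²/(3d²) + O(d⁻³)`, where
`Q(ρ) = ∬_{|x−y|>1} ρ(x)ρ(y) dx dy`. -/
theorem stmt_8 :
    ∃ C : ℝ, 0 < C ∧ ∃ d₀ : ℝ, 0 < d₀ ∧
      ∀ d : ℝ, d₀ ≤ d →
        |(∫ p in {p : ℝ × ℝ | 1 < |p.1 - p.2|}, rho d p.1 * rho d p.2) -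
            Real.pi ^ 2 / (3 * d ^ 2)| ≤ C / d ^ 3 := by
  refine ⟨64, by norm_num, 1, one_pos, fun d hd => ?_⟩
  have hd₀ : 0 < d := one_pos.trans_le hd
  have hQ : (∫ p in {p : ℝ × ℝ | 1 < |p.1 - p.2|}, rho d p.1 * rho d p.2) =
      2 / d ^ 2 * ∫ s, rescaledIntegrand d s := by
    simp_rw [setIntegral_lt_abs_sub_mul (integrable_rho hd₀) zero_le_one, integral_Iio_rho hd₀,
      integral_rho_mul_rhoCDF hd₀]
    ring
  have hexp : exp (-d / 2) ≤ 2 / d := by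
    rw [neg_div, exp_neg, inv_le_comm₀ (exp_pos _) (by positivity), inv_div]
    linarith [add_one_le_exp (d / 2)]
  have herr := abs_integral_rescaledIntegrand_sub_le hd₀.le
  calc |(∫ p in {p : ℝ × ℝ | 1 < |p.1 - p.2|}, rho d p.1 * rho d p.2) - π ^ 2 / (3 * d ^ 2)|
      = 2 / d ^ 2 * |(∫ s, rescaledIntegrand d s) - π ^ 2 / 6| := by
        rw [hQ, show π ^ 2 / (3 * d ^ 2) = 2 / d ^ 2 * (π ^ 2 / 6) by ring, ← mul_sub,
          abs_mul, abs_of_pos (by positivity)]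
    _ ≤ 2 / d ^ 2 * (16 * (2 / d)) := by gcongr; linarith
    _ = 64 / d ^ 3 := by field_simp; ring

end
end

section
/- Let G be a finite simple graph on vertex set V with |V| ≥ m, where m ≥ 1 is an integer such that any two disjoint subsets A, B ⊆ V with |A| = |B| = m are joined by at least one edge of G. Then for every function x : V → ℝ satisfying |x(u) − x(v)| ≤ 1 for every edge uv of G, there exists a vertex v ∈ V such that the number of vertices u with x(u) ∉ [x(v), x(v) + 1] is at most 2m − 2. -/
/-- Flatness: if in `G` any two disjoint `m`-sets of vertices are joined by an edge,
then every 1-Lipschitz `x : V → ℝ` has a vertex `v` such that all but at most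
`2m − 2` vertices take values in `[x v, x v + 1]`. -/
theorem stmt_10 {V : Type*} [Fintype V] (G : SimpleGraph V) (m : ℕ) (hm : 1 ≤ m)
    (hcard : m ≤ Fintype.card V)
    (hjoin : ∀ A B : Finset V, Disjoint A B → A.card = m → B.card = m →
      ∃ a ∈ A, ∃ b ∈ B, G.Adj a b)
    (x : V → ℝ) (hx : ∀ u v, G.Adj u v → |x u - x v| ≤ 1) :
    ∃ v : V, {u : V | x u ∉ Set.Icc (x v) (x v + 1)}.ncard ≤ 2 * m - 2 := by
  classical
  set F : ℝ → Finset V := fun t => Finset.univ.filter (fun u => x u ≤ t) with hF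
  set C : Finset V := Finset.univ.filter (fun v => m ≤ (F (x v)).card) with hC
  -- C is nonempty: a vertex maximizing x belongs to it
  have hVne : (Finset.univ : Finset V).Nonempty := by
    rw [Finset.univ_nonempty_iff]
    have : 0 < Fintype.card V := lt_of_lt_of_le hm hcard
    exact Fintype.card_pos_iff.mp this
  obtain ⟨v0, _, hv0⟩ := Finset.exists_max_image Finset.univ x hVne
  have hCne : C.Nonempty := by
    refine ⟨v0, ?_⟩
    simp only [hC, Finset.mem_filter, Finset.mem_univ, true_and]
    have : F (x v0) = Finset.univ := by
      ext u; simp only [hF, Finset.mem_filter, Finset.mem_univ, true_and]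
      exact iff_of_true (hv0 u (Finset.mem_univ u)) trivial
    rw [this, Finset.card_univ]; exact hcard
  obtain ⟨v, hvC, hvmin⟩ := Finset.exists_min_image C x hCne
  have hvF : m ≤ (F (x v)).card := by
    simpa only [hC, Finset.mem_filter, Finset.mem_univ, true_and] using hvC
  refine ⟨v, ?_⟩
  set L : Finset V := Finset.univ.filter (fun u => x u < x v) with hL
  set H : Finset V := Finset.univ.filter (fun u => x v + 1 < x u) with hH
  -- L has at most m-1 elements
  have hLcard : L.card ≤ m - 1 := by
    by_contra h
    push_neg at h
    have hLm : m ≤ L.card := by omega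
    have hLne : L.Nonempty := Finset.card_pos.mp (lt_of_lt_of_le hm hLm)
    obtain ⟨u, huL, humax⟩ := Finset.exists_max_image L x hLne
    have huC : u ∈ C := by
      simp only [hC, Finset.mem_filter, Finset.mem_univ, true_and]
      refine le_trans hLm (Finset.card_le_card ?_)
      intro w hw
      simp only [hF, Finset.mem_filter, Finset.mem_univ, true_and]
      exact humax w hw
    have := hvmin u huC
    have huv : x u < x v := by
      simpa only [hL, Finset.mem_filter, Finset.mem_univ, true_and] using huL
    linarith
  -- H has at most m-1 elements
  have hHcard : H.card ≤ m - 1 := by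
    by_contra h
    push_neg at h
    have hHm : m ≤ H.card := by omega
    obtain ⟨B, hBH, hBcard⟩ := Finset.exists_subset_card_eq hHm
    obtain ⟨A, hAF, hAcard⟩ := Finset.exists_subset_card_eq hvF
    have hdisj : Disjoint A B := by
      rw [Finset.disjoint_left]
      intro a haA haB
      have h1 : x a ≤ x v := by
        have := hAF haA
        simpa only [hF, Finset.mem_filter, Finset.mem_univ, true_and] using this
      have h2 : x v + 1 < x a := by
        have := hBH haB
        simpa only [hH, Finset.mem_filter, Finset.mem_univ, true_and] using this
      linarith
    obtain ⟨a, haA, b, hbB, hab⟩ := hjoin A B hdisj hAcard hBcard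
    have h1 : x a ≤ x v := by
      have := hAF haA
      simpa only [hF, Finset.mem_filter, Finset.mem_univ, true_and] using this
    have h2 : x v + 1 < x b := by
      have := hBH hbB
      simpa only [hH, Finset.mem_filter, Finset.mem_univ, true_and] using this
    have := hx a b hab
    rw [abs_le] at this
    linarith [this.1]
  -- conclude
  have hset : {u : V | x u ∉ Set.Icc (x v) (x v + 1)} = ↑(L ∪ H) := by
    ext u
    simp only [Set.mem_setOf_eq, Set.mem_Icc, Finset.coe_union, Set.mem_union,
      hL, hH, Finset.coe_filter, Finset.mem_univ, true_and, Set.mem_setOf_eq]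
    constructor
    · intro hu
      by_cases h1 : x u < x v
      · exact Or.inl h1
      · right; push_neg at h1 hu; linarith [hu h1]
    · rintro (h | h) ⟨h1, h2⟩ <;> linarith
  rw [hset, Set.ncard_coe_finset]
  calc (L ∪ H).card ≤ L.card + H.card := Finset.card_union_le L H
    _ ≤ (m - 1) + (m - 1) := Nat.add_le_add hLcard hHcard
    _ ≤ 2 * m - 2 := by omega
end

section
/- For every q with 0 < q < 1 and all integers N, r ≥ 0, A_{N,r}(q) = (1 / C(N + r, r)) · ∏_{j=1}^r (1 − q^{N+j})/(1 − q^j), where C(N + r, r) is the ordinary binomial coefficient. -/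
/-!
Read `(t, y)` as one point `x` of `[0,1]^(N+r)`. The integrand only depends on the relative
order of the coordinates of `x`, and almost every `x` has distinct coordinates, so symmetrising
over the `(N+r)!` permutations of the coordinates gives `(N+r)! A_{N,r}(q) = ∑_τ q^(cr τ)`, where
`cr τ` counts the pairs `(i, u)` with `τ i < τ (N + u)`. If `S` is the set of positions
`τ (N + u)`, then `cr τ = ∑ S - C(r,2)`, and each `r`-subset `S` of `{0, …, N+r-1}` comes from
exactly `N! r!` permutations. The subset-sum generating function `∑_{|S| = r} q^(∑ S)` obeys the
`q`-Pascal recurrence, which it shares with `q^C(r,2) ∏_{j<r} (1 - q^(N+j+1)) / (1 - q^(j+1))`.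
-/

open MeasureTheory

noncomputable section

/-- `A_{N,r}(q) = ∫_{[0,1]^N} ∫_{[0,1]^r} q^{#{(i,u) : y_u > t_i}} dy dt`. -/
def Aint (q : ℝ) (N r : ℕ) : ℝ :=
  ∫ t in Set.univ.pi fun _ : Fin N => Set.Icc (0 : ℝ) 1,
    ∫ y in Set.univ.pi fun _ : Fin r => Set.Icc (0 : ℝ) 1,
      q ^ (Finset.univ.filter fun p : Fin N × Fin r => t p.1 < y p.2).card

open Finset Equiv
open scoped Nat

def subsetSumGF {R : Type*} [CommSemiring R] (q : R) (n r : ℕ) : R :=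
  ∑ S ∈ (range n).powersetCard r, q ^ ∑ s ∈ S, s

section subsetSumGF

variable {R : Type*} [CommSemiring R] (q : R)

lemma subsetSumGF_zero_right (n : ℕ) : subsetSumGF q n 0 = 1 := by
  simp [subsetSumGF]

lemma subsetSumGF_self (n : ℕ) : subsetSumGF q n n = q ^ n.choose 2 := by
  have h := powersetCard_self (range n)
  rw [card_range] at h
  rw [subsetSumGF, h, sum_singleton, sum_range_id, Nat.choose_two_right]

lemma subsetSumGF_succ_succ (n r : ℕ) :
    subsetSumGF q (n + 1) (r + 1) = subsetSumGF q n (r + 1) + q ^ n * subsetSumGF q n r := by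
  have hn : n ∉ range n := by simp
  have hnot : ∀ S ∈ (range n).powersetCard r, n ∉ S := fun S hS h =>
    hn ((mem_powersetCard.1 hS).1 h)
  rw [subsetSumGF, range_add_one, powersetCard_succ_insert hn, sum_union, sum_image, subsetSumGF,
    subsetSumGF, mul_sum]
  · congr 1
    exact sum_congr rfl fun S hS => by rw [sum_insert (hnot S hS), pow_add]
  · intro S hS T hT hST
    simpa [erase_insert (hnot S hS), erase_insert (hnot T hT)] using congrArg (erase · n) hST
  · refine disjoint_left.2 fun S hS hS' => ?_
    obtain ⟨T, -, rfl⟩ := mem_image.1 hS'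
    exact hn ((mem_powersetCard.1 hS).1 (mem_insert_self n T))

end subsetSumGF

theorem subsetSumGF_mul_prod {R : Type*} [CommRing R] (q : R) (N r : ℕ) :
    subsetSumGF q (N + r) r * ∏ j ∈ range r, (1 - q ^ (j + 1)) =
      q ^ r.choose 2 * ∏ j ∈ range r, (1 - q ^ (N + j + 1)) := by
  induction r generalizing N with
  | zero => simp [subsetSumGF_zero_right]
  | succ r ih =>
    induction N with
    | zero => simp [subsetSumGF_self]
    | succ N ihN =>
      have hpascal : subsetSumGF q (N + 1 + (r + 1)) (r + 1) =
          subsetSumGF q (N + (r + 1)) (r + 1) + q ^ (N + 1 + r) * subsetSumGF q (N + 1 + r) r := by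
        rw [show N + 1 + (r + 1) = N + 1 + r + 1 by ring, subsetSumGF_succ_succ,
          show N + 1 + r = N + (r + 1) by ring]
      have hshift : ∏ j ∈ range (r + 1), (1 - q ^ (N + j + 1)) =
          (1 - q ^ (N + 1)) * ∏ j ∈ range r, (1 - q ^ (N + 1 + j + 1)) := by
        rw [prod_range_succ', mul_comm]
        simp only [add_assoc, add_comm 1]
      have hD : ∏ j ∈ range (r + 1), (1 - q ^ (j + 1)) =
          (∏ j ∈ range r, (1 - q ^ (j + 1))) * (1 - q ^ (r + 1)) := prod_range_succ _ _
      have hU : ∏ j ∈ range (r + 1), (1 - q ^ (N + 1 + j + 1)) =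
          (∏ j ∈ range r, (1 - q ^ (N + 1 + j + 1))) * (1 - q ^ (N + 1 + r + 1)) :=
        prod_range_succ _ _
      have hC : (r + 1).choose 2 = r.choose 2 + r := by
        rw [Nat.choose_succ_succ', Nat.choose_one_right, add_comm]
      rw [hshift, hC, hD] at ihN
      rw [hpascal, hU, hC, hD]
      linear_combination ihN + q ^ N * q * q ^ r * (1 - q ^ (r + 1)) * ih (N + 1)

def blockCrossings {α : Type*} [LinearOrder α] (N r : ℕ) (x : Fin (N + r) → α) : ℕ :=
  #{p : Fin N × Fin r | x (Fin.castAdd r p.1) < x (Fin.natAdd N p.2)}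

lemma blockCrossings_congr {α β : Type*} [LinearOrder α] [LinearOrder β] {N r : ℕ}
    {x : Fin (N + r) → α} {z : Fin (N + r) → β} (h : ∀ a b, x a < x b ↔ z a < z b) :
    blockCrossings N r x = blockCrossings N r z := by
  simp only [blockCrossings, h]

lemma card_filter_lt_pairs {α : Type*} [LinearOrder α] {r : ℕ} {y : Fin r → α}
    (hy : Function.Injective y) : #{p : Fin r × Fin r | y p.2 < y p.1} = r.choose 2 := by
  have hmono : StrictMono (y ∘ Tuple.sort y) :=
    (Tuple.monotone_sort y).strictMono_of_injective (hy.comp (Tuple.sort y).injective)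
  have hsorted : #{p : Fin r × Fin r | p.2 < p.1} = #{p : Fin r × Fin r | y p.2 < y p.1} :=
    card_equiv ((Tuple.sort y).prodCongr (Tuple.sort y)) fun p => by
      simpa using hmono.lt_iff_lt.symm
  rw [← hsorted, card_filter, Fintype.sum_prod_type]
  simp_rw [← card_filter, filter_gt_eq_Iio, Fin.card_Iio]
  rw [Fin.sum_univ_eq_sum_range (fun i => i), sum_range_id, Nat.choose_two_right]

lemma blockCrossings_add_choose_two {N r : ℕ} (τ : Perm (Fin (N + r))) :
    blockCrossings N r τ + r.choose 2 =
      ∑ u, (τ (Fin.natAdd N u) : ℕ) := by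
  have hrank : ∀ s : Fin (N + r), (s : ℕ) =
      (∑ i, if τ (Fin.castAdd r i) < s then 1 else 0) +
        ∑ v, if τ (Fin.natAdd N v) < s then 1 else 0 := by
    intro s
    rw [← Fin.sum_univ_add (fun a => if τ a < s then 1 else 0), ← card_filter,
      card_equiv τ (t := Iio s) (by simp), Fin.card_Iio]
  have hinj : Function.Injective fun u => τ (Fin.natAdd N u) :=
    τ.injective.comp (Fin.natAdd_injective _ _)
  rw [blockCrossings, ← card_filter_lt_pairs hinj, card_filter, card_filter,
    Fintype.sum_prod_type, Fintype.sum_prod_type, sum_comm, ← sum_add_distrib]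
  exact (sum_congr rfl fun u _ => hrank (τ (Fin.natAdd N u))).symm

lemma card_perm_map_eq {α : Type*} [Fintype α] [DecidableEq α] {s t : Finset α} (h : #s = #t) :
    #{σ : Perm α | s.map σ.toEmbedding = t} = (#s)! * (Fintype.card α - #s)! := by
  have hmem : ∀ σ : Perm α, s.map σ.toEmbedding = t ↔ ∀ a, a ∈ s ↔ σ a ∈ t := by
    intro σ
    refine ⟨fun hσ a => by simp [← hσ], fun hσ => ?_⟩
    refine eq_of_subset_of_card_le (fun b hb => ?_) (by rw [card_map, h])
    obtain ⟨a, ha, rfl⟩ := mem_map.1 hb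
    exact (hσ a).1 ha
  let e : {σ : Perm α // s.map σ.toEmbedding = t} ≃
      ({a // a ∈ s} ≃ {a // a ∈ t}) × ({a // a ∉ s} ≃ {a // a ∉ t}) :=
    { toFun σ := (σ.1.subtypeEquiv ((hmem σ.1).1 σ.2),
        σ.1.subtypeEquiv fun a => not_congr ((hmem σ.1).1 σ.2 a))
      invFun ef := ⟨subtypeCongr ef.1 ef.2, (hmem _).2 fun a => by
        by_cases ha : a ∈ s
        · simp [subtypeCongr, sumCompl, ha]
        · simpa [subtypeCongr, sumCompl, ha] using (ef.2 ⟨a, ha⟩).2⟩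
      left_inv σ := by
        ext a
        by_cases ha : a ∈ s <;> simp [subtypeCongr, sumCompl, ha]
      right_inv ef := by
        ext a <;> simp [subtypeCongr, sumCompl, a.2] }
  have hs : Fintype.card {a // a ∈ s} = #s := Fintype.card_coe s
  have hsc : Fintype.card {a // a ∉ s} = Fintype.card α - #s := by
    rw [Fintype.card_subtype_compl, hs]
  rw [← Fintype.card_subtype, Fintype.card_congr e, Fintype.card_prod,
    Fintype.card_equiv (Fintype.equivOfCardEq (by simp [h])),
    Fintype.card_equiv (Fintype.equivOfCardEq (by simp [Fintype.card_subtype_compl, h])), hs, hsc]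

lemma sum_powersetCard_fin_map_val {M : Type*} [AddCommMonoid M] (n r : ℕ) (f : Finset ℕ → M) :
    ∑ S ∈ (univ : Finset (Fin n)).powersetCard r, f (S.map Fin.valEmbedding) =
      ∑ S ∈ (range n).powersetCard r, f S := by
  rw [← Nat.Iio_eq_range, ← Fin.map_valEmbedding_univ, powersetCard_map, sum_map]
  rfl

theorem sum_perm_pow_blockCrossings {R : Type*} [CommSemiring R] (q : R) (N r : ℕ) :
    q ^ r.choose 2 * ∑ τ : Perm (Fin (N + r)), q ^ blockCrossings N r τ =
      N ! * r ! * subsetSumGF q (N + r) r := by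
  set A : Finset (Fin (N + r)) := univ.map (Fin.natAddEmb N)
  have hA : #A = r := by simp [A]
  have hpositions : ∀ τ : Perm (Fin (N + r)),
      q ^ r.choose 2 * q ^ blockCrossings N r τ =
        q ^ ∑ s ∈ A.map τ.toEmbedding, (s : ℕ) := by
    intro τ
    rw [← pow_add, add_comm, blockCrossings_add_choose_two]
    simp [A]
  have hfiber : ∀ S ∈ (univ : Finset (Fin (N + r))).powersetCard r,
      #{τ : Perm (Fin (N + r)) | A.map τ.toEmbedding = S} = N ! * r ! := by
    intro S hS
    rw [card_perm_map_eq (by rw [hA, (mem_powersetCard.1 hS).2]), hA, Fintype.card_fin,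
      Nat.add_sub_cancel, mul_comm]
  calc q ^ r.choose 2 * ∑ τ : Perm (Fin (N + r)), q ^ blockCrossings N r τ
      = ∑ τ : Perm (Fin (N + r)), q ^ ∑ s ∈ A.map τ.toEmbedding, (s : ℕ) := by
        rw [mul_sum]; exact sum_congr rfl fun τ _ => hpositions τ
    _ = ∑ S ∈ (univ : Finset (Fin (N + r))).powersetCard r,
          ∑ τ : Perm (Fin (N + r)) with A.map τ.toEmbedding = S,
            q ^ ∑ s ∈ S, (s : ℕ) := by
        rw [← sum_fiberwise_of_maps_to (g := fun τ : Perm (Fin (N + r)) => A.map τ.toEmbedding)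
          (t := (univ : Finset (Fin (N + r))).powersetCard r)
          (fun τ _ => mem_powersetCard.2 ⟨subset_univ _, by rw [card_map, hA]⟩)]
        refine sum_congr rfl fun S _ => sum_congr rfl fun τ hτ => ?_
        rw [(mem_filter.1 hτ).2]
    _ = N ! * r ! * subsetSumGF q (N + r) r := by
        rw [subsetSumGF, ← sum_powersetCard_fin_map_val, mul_sum]
        refine sum_congr rfl fun S hS => ?_
        rw [sum_const, hfiber S hS, sum_map, nsmul_eq_mul]
        push_cast
        rfl

def unitCube (ι : Type*) : Set (ι → ℝ) := Set.univ.pi fun _ => Set.Icc 0 1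

section unitCube

variable {ι : Type*}

lemma comp_perm_preimage_unitCube (σ : Perm ι) :
    (fun x : ι → ℝ => x ∘ σ) ⁻¹' unitCube ι = unitCube ι := by
  ext x
  simp only [Set.mem_preimage, unitCube, Set.mem_univ_pi, Function.comp_apply]
  exact ⟨fun h i => by simpa using h (σ.symm i), fun h i => h (σ i)⟩

lemma measurableEmbedding_comp_perm (σ : Perm ι) :
    MeasurableEmbedding (fun x : ι → ℝ => x ∘ σ) :=
  (MeasurableEquiv.arrowCongr' σ.symm (MeasurableEquiv.refl ℝ)).measurableEmbedding

variable [Fintype ι]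

lemma measurableSet_unitCube : MeasurableSet (unitCube ι) :=
  MeasurableSet.univ_pi fun _ => measurableSet_Icc

lemma volume_unitCube : volume (unitCube ι) = 1 := by
  rw [unitCube, volume_pi_pi]
  simp

lemma measurePreserving_comp_perm (σ : Perm ι) :
    MeasurePreserving (fun x : ι → ℝ => x ∘ σ) :=
  volume_preserving_arrowCongr' σ.symm (MeasurableEquiv.refl ℝ) (.id volume)

lemma integrableOn_unitCube_comp_perm {f : (ι → ℝ) → ℝ} (hf : IntegrableOn f (unitCube ι))
    (σ : Perm ι) : IntegrableOn (fun x => f (x ∘ σ)) (unitCube ι) := by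
  have h := ((measurePreserving_comp_perm σ).integrableOn_comp_preimage
    (measurableEmbedding_comp_perm σ)).2 hf
  rwa [comp_perm_preimage_unitCube] at h

lemma setIntegral_unitCube_comp_perm (f : (ι → ℝ) → ℝ) (σ : Perm ι) :
    ∫ x in unitCube ι, f (x ∘ σ) = ∫ x in unitCube ι, f x := by
  have h := (measurePreserving_comp_perm σ).setIntegral_preimage_emb
    (measurableEmbedding_comp_perm σ) f (unitCube ι)
  rwa [comp_perm_preimage_unitCube] at h

lemma ae_injective : ∀ᵐ x : ι → ℝ, Function.Injective x := by
  classical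
  have hdiag : ∀ i j : ι, i ≠ j → volume {x : ι → ℝ | x i = x j} = 0 := by
    intro i j hij
    let ℓ : (ι → ℝ) →ₗ[ℝ] ℝ :=
      (LinearMap.proj i : (ι → ℝ) →ₗ[ℝ] ℝ) - LinearMap.proj j
    have hℓ : LinearMap.ker ℓ ≠ ⊤ := fun h => by
      have := LinearMap.mem_ker.1
        (h ▸ Submodule.mem_top : Pi.single i (1 : ℝ) ∈ LinearMap.ker ℓ)
      simp [ℓ, hij.symm] at this
    have hset : {x : ι → ℝ | x i = x j} = LinearMap.ker ℓ := by
      ext x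
      simp [ℓ, sub_eq_zero]
    rw [hset]
    exact Measure.addHaar_submodule _ _ hℓ
  have hbad : {x : ι → ℝ | ¬ Function.Injective x} ⊆
      ⋃ (i : ι) (j : ι) (_ : i ≠ j), {x | x i = x j} := by
    intro x hx
    simp only [Function.Injective, Set.mem_ofPred_eq, not_forall] at hx
    obtain ⟨i, j, hxij, hij⟩ := hx
    exact Set.mem_iUnion₂.2 ⟨i, j, Set.mem_iUnion.2 ⟨hij, hxij⟩⟩
  exact measure_mono_null hbad (measure_iUnion_null fun i => measure_iUnion_null fun j =>
    measure_iUnion_null fun hij => hdiag i j hij)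

lemma sum_perm_comp_eq_of_injective {M : Type*} [AddCommMonoid M] {n : ℕ}
    {f : (Fin n → ℝ) → M}
    (hf : ∀ x z : Fin n → ℝ, (∀ a b, x a < x b ↔ z a < z b) → f x = f z)
    {x : Fin n → ℝ} (hx : Function.Injective x) :
    ∑ σ : Perm (Fin n), f (x ∘ σ) = ∑ τ : Perm (Fin n), f fun a => ((τ a : ℕ) : ℝ) := by
  have hmono : StrictMono (x ∘ Tuple.sort x) :=
    (Tuple.monotone_sort x).strictMono_of_injective (hx.comp (Tuple.sort x).injective)
  rw [← Equiv.sum_comp (Equiv.mulLeft (Tuple.sort x))]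
  refine sum_congr rfl fun τ _ => hf _ _ fun a b => ?_
  rw [Nat.cast_lt, ← Fin.lt_def, ← hmono.lt_iff_lt]
  rfl

theorem factorial_mul_setIntegral_unitCube {n : ℕ} {f : (Fin n → ℝ) → ℝ}
    (hfi : IntegrableOn f (unitCube (Fin n)))
    (hf : ∀ x z : Fin n → ℝ, (∀ a b, x a < x b ↔ z a < z b) → f x = f z) :
    n ! * ∫ x in unitCube (Fin n), f x = ∑ τ : Perm (Fin n), f fun a => ((τ a : ℕ) : ℝ) := by
  calc (n ! : ℝ) * ∫ x in unitCube (Fin n), f x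
      = ∑ σ : Perm (Fin n), ∫ x in unitCube (Fin n), f (x ∘ σ) := by
        simp [setIntegral_unitCube_comp_perm, Fintype.card_perm]
    _ = ∫ x in unitCube (Fin n), ∑ σ : Perm (Fin n), f (x ∘ σ) :=
        (integral_finsetSum _ fun σ _ => integrableOn_unitCube_comp_perm hfi σ).symm
    _ = ∫ x in unitCube (Fin n), ∑ τ : Perm (Fin n), f (fun a => ((τ a : ℕ) : ℝ)) :=
        setIntegral_congr_ae measurableSet_unitCube (ae_injective.mono fun x hx _ =>
          sum_perm_comp_eq_of_injective hf hx)
    _ = ∑ τ : Perm (Fin n), f (fun a => ((τ a : ℕ) : ℝ)) := by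
        simp [measureReal_def, volume_unitCube]

end unitCube

lemma setIntegral_unitCube_append {N r : ℕ} (g : (Fin N → ℝ) → (Fin r → ℝ) → ℝ)
    (hg : IntegrableOn (fun x : Fin (N + r) → ℝ => g (x ∘ Fin.castAdd r) (x ∘ Fin.natAdd N))
      (unitCube (Fin (N + r)))) :
    ∫ t in unitCube (Fin N), ∫ y in unitCube (Fin r), g t y =
      ∫ x in unitCube (Fin (N + r)), g (x ∘ Fin.castAdd r) (x ∘ Fin.natAdd N) := by
  let T := (MeasurableEquiv.piCongrLeft (fun _ => ℝ) finSumFinEquiv).symm.trans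
    (MeasurableEquiv.sumPiEquivProdPi fun _ : Fin N ⊕ Fin r => ℝ)
  have hT : MeasurePreserving T :=
    (volume_measurePreserving_sumPiEquivProdPi _).comp
      (volume_measurePreserving_piCongrLeft (fun _ => ℝ) finSumFinEquiv).symm
  have hTx : ∀ x, T x = (x ∘ Fin.castAdd r, x ∘ Fin.natAdd N) := fun x => rfl
  have hpre : T ⁻¹' (unitCube (Fin N) ×ˢ unitCube (Fin r)) = unitCube (Fin (N + r)) := by
    ext x
    simp only [Set.mem_preimage, hTx, Set.mem_prod, unitCube, Set.mem_univ_pi,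
      Function.comp_apply]
    exact ⟨fun h a => Fin.addCases h.1 h.2 a, fun h => ⟨fun i => h _, fun u => h _⟩⟩
  have hgT : IntegrableOn (Function.uncurry g) (unitCube (Fin N) ×ˢ unitCube (Fin r)) := by
    rw [← hT.integrableOn_comp_preimage T.measurableEmbedding, hpre]
    exact hg
  rw [Measure.volume_eq_prod] at hgT
  calc ∫ t in unitCube (Fin N), ∫ y in unitCube (Fin r), g t y
      = ∫ z in unitCube (Fin N) ×ˢ unitCube (Fin r), Function.uncurry g z := by
        rw [Measure.volume_eq_prod, setIntegral_prod _ hgT]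
        rfl
    _ = ∫ x in unitCube (Fin (N + r)), g (x ∘ Fin.castAdd r) (x ∘ Fin.natAdd N) := by
        rw [← hT.setIntegral_preimage_emb T.measurableEmbedding, hpre]
        rfl

lemma measurable_blockCrossings (N r : ℕ) :
    Measurable (blockCrossings N r : (Fin (N + r) → ℝ) → ℕ) := by
  unfold blockCrossings
  simp_rw [card_filter]
  exact Finset.measurable_sum _ fun p _ => Measurable.ite
    (measurableSet_lt (measurable_pi_apply _) (measurable_pi_apply _)) measurable_const
    measurable_const

lemma integrableOn_pow_blockCrossings {q : ℝ} (hq0 : 0 ≤ q) (hq1 : q ≤ 1) (N r : ℕ) :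
    IntegrableOn (fun x : Fin (N + r) → ℝ => q ^ blockCrossings N r x)
      (unitCube (Fin (N + r))) := by
  refine Measure.integrableOn_of_bounded (M := 1) (by simp [volume_unitCube])
    (measurable_const.pow (measurable_blockCrossings N r)).aestronglyMeasurable
    (ae_of_all _ fun x => ?_)
  rw [Real.norm_eq_abs, abs_of_nonneg (by positivity)]
  exact pow_le_one₀ hq0 hq1

lemma factorial_mul_setIntegral_pow_blockCrossings {q : ℝ} (hq0 : 0 ≤ q) (hq1 : q ≤ 1)
    (N r : ℕ) :
    (N + r)! * ∫ x in unitCube (Fin (N + r)), q ^ blockCrossings N r x =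
      ∑ τ : Perm (Fin (N + r)), q ^ blockCrossings N r τ := by
  rw [factorial_mul_setIntegral_unitCube (integrableOn_pow_blockCrossings hq0 hq1 N r)
    fun x z h => congrArg (q ^ ·) (blockCrossings_congr h)]
  exact sum_congr rfl fun τ _ => congrArg (q ^ ·)
    (blockCrossings_congr fun a b => (Nat.cast_lt (α := ℝ)).trans Fin.lt_def.symm)

/-- One-tail q-binomial identity:
`A_{N,r}(q) = C(N+r, r)⁻¹ · ∏_{j=1}^r (1 − q^{N+j})/(1 − q^j)`. -/
theorem stmt_12 (q : ℝ) (hq0 : 0 < q) (hq1 : q < 1) (N r : ℕ) :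
    Aint q N r =
      (1 / ((N + r).choose r : ℝ)) *
        ∏ j ∈ Finset.range r, (1 - q ^ (N + j + 1)) / (1 - q ^ (j + 1)) := by
  have hsym : ((N + r)! : ℝ) * Aint q N r =
      ∑ τ : Perm (Fin (N + r)), q ^ blockCrossings N r τ := by
    rw [← factorial_mul_setIntegral_pow_blockCrossings hq0.le hq1.le]
    exact congrArg _ (setIntegral_unitCube_append
      (fun t y => q ^ #{p : Fin N × Fin r | t p.1 < y p.2})
      (integrableOn_pow_blockCrossings hq0.le hq1.le N r))
  have hperm := sum_perm_pow_blockCrossings q N r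
  have hgauss := subsetSumGF_mul_prod q N r
  have hchoose : ((N + r).choose r * N ! * r ! : ℝ) = (N + r)! := by
    exact_mod_cast Nat.add_choose_mul_factorial_mul_factorial N r
  set D := ∏ j ∈ range r, (1 - q ^ (j + 1))
  have hD : D ≠ 0 :=
    prod_ne_zero_iff.2 fun j _ => (sub_pos.2 (pow_lt_one₀ hq0.le hq1 j.succ_ne_zero)).ne'
  have hC : ((N + r).choose r : ℝ) ≠ 0 :=
    Nat.cast_ne_zero.2 (Nat.choose_pos (Nat.le_add_left r N)).ne'
  rw [prod_div_distrib, div_mul_div_comm, one_mul, eq_div_iff (mul_ne_zero hC hD)]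
  refine mul_left_cancel₀ (by positivity : q ^ r.choose 2 * N ! * r ! ≠ 0) ?_
  linear_combination (q ^ r.choose 2 * D * Aint q N r) * hchoose + (q ^ r.choose 2 * D) * hsym +
    D * hperm + (N ! * r ! : ℝ) * hgauss

end
end

section
/- Fix integers N, r, s ≥ 0 and 0 < q < 1. For t ∈ [0,1]^N define B_r(t) = ∫_{[0,1]^r} q^{#{(i,u) : y_u > t_i}} dy and C_s(t) = ∫_{[0,1]^s} q^{#{(i,w) : z_w > 1 − t_i}} dz. Then ∫_{[0,1]^N} B_r(t) C_s(t) dt ≤ A_{N,r}(q) · A_{N,s}(q). -/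
/-!
Write `q^{#{(i,u) : y_u > t_i}} = ∏_i w_y(t_i)` with `w_y(a) = q^{#{u : y_u > a}}`, which is
nondecreasing in `a` because `q ≤ 1`. By Fubini the left-hand side equals
`∫∫ (∫_0^1 w_y(a) w_z(1 - a) da)^N dy dz`, while `A_{N,r} = ∫ (∫_0^1 w_y)^N dy`. Since
`a ↦ w_z(1 - a)` is nonincreasing, Chebyshev's integral inequality bounds the inner integral by
`(∫ w_y) (∫ w_z(1 - ·)) = (∫ w_y) (∫ w_z)`, and the resulting integrand splits into a product.
-/

open MeasureTheory

noncomputable section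

open Set Finset

section Chebyshev

variable {α : Type*} [LinearOrder α] [MeasurableSpace α] {μ : Measure α} [IsProbabilityMeasure μ]
  {f g : α → ℝ}

/-- Chebyshev's integral inequality: integrate `(f y - f x) (g x - g y) ≥ 0` over `μ ⊗ μ`. -/
theorem integral_mul_le_integral_mul_integral_of_monotone_antitone (hf : Monotone f)
    (hg : Antitone g) (hfi : Integrable f μ) (hgi : Integrable g μ)
    (hfgi : Integrable (fun x => f x * g x) μ) :
    ∫ x, f x * g x ∂μ ≤ (∫ x, f x ∂μ) * ∫ x, g x ∂μ := by
  have hcross : Integrable (fun p : α × α => f p.1 * g p.2 + g p.1 * f p.2) (μ.prod μ) :=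
    (hfi.mul_prod hgi).add (hgi.mul_prod hfi)
  have hdiag : Integrable (fun p : α × α => f p.1 * g p.1 + f p.2 * g p.2) (μ.prod μ) :=
    (hfgi.comp_fst μ).add (hfgi.comp_snd μ)
  have hnonneg : 0 ≤ ∫ p, (f p.1 * g p.2 + g p.1 * f p.2) - (f p.1 * g p.1 + f p.2 * g p.2)
      ∂μ.prod μ := by
    refine integral_nonneg fun p => ?_
    have key : 0 ≤ (f p.2 - f p.1) * (g p.1 - g p.2) := by
      rcases le_total p.1 p.2 with h | h
      · exact mul_nonneg (sub_nonneg.2 (hf h)) (sub_nonneg.2 (hg h))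
      · exact mul_nonneg_of_nonpos_of_nonpos (sub_nonpos.2 (hf h)) (sub_nonpos.2 (hg h))
    show (0 : ℝ) ≤ _
    linarith
  rw [integral_sub hcross hdiag, integral_add (hfi.mul_prod hgi) (hgi.mul_prod hfi),
    integral_add (hfgi.comp_fst μ) (hfgi.comp_snd μ), integral_prod_mul, integral_prod_mul,
    integral_fun_fst (fun x => f x * g x), integral_fun_snd (fun x => f x * g x)] at hnonneg
  simp only [probReal_univ, one_smul] at hnonneg
  linarith

end Chebyshev

theorem setIntegral_Icc_comp_add_sub (f : ℝ → ℝ) {a b : ℝ} (hab : a ≤ b) :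
    ∫ x in Icc a b, f (a + b - x) = ∫ x in Icc a b, f x := by
  simp only [integral_Icc_eq_integral_Ioc, ← intervalIntegral.integral_of_le hab,
    intervalIntegral.integral_comp_sub_left f (a + b)]
  ring_nf

theorem integral_pi_integral_prod_eq_integral_pow {ι α Y : Type*} [Fintype ι]
    [MeasurableSpace α] [MeasurableSpace Y] {ν : Measure α} [IsFiniteMeasure ν] {ρ : Measure Y}
    [IsFiniteMeasure ρ] {F : α → Y → ℝ} (hF : Measurable (Function.uncurry F)) {C : ℝ}
    (hC : ∀ a y, ‖F a y‖ ≤ C) :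
    ∫ t, ∫ y, ∏ i, F (t i) y ∂ρ ∂(Measure.pi fun _ : ι => ν) =
      ∫ y, (∫ a, F a y ∂ν) ^ Fintype.card ι ∂ρ := by
  have hmeas : Measurable (Function.uncurry fun (t : ι → α) (y : Y) => ∏ i, F (t i) y) :=
    Finset.measurable_prod _ fun i _ =>
      hF.comp (f := fun p : (ι → α) × Y => (p.1 i, p.2)) (by fun_prop)
  have hint : Integrable (Function.uncurry fun (t : ι → α) (y : Y) => ∏ i, F (t i) y)
      ((Measure.pi fun _ : ι => ν).prod ρ) := by
    refine Integrable.of_bound hmeas.aestronglyMeasurable (C ^ Fintype.card ι)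
      (ae_of_all _ fun p => ?_)
    rw [Function.uncurry_apply_pair, norm_prod, ← Finset.card_univ, ← Finset.prod_const]
    exact Finset.prod_le_prod (fun i _ => norm_nonneg _) fun i _ => hC _ _
  rw [integral_integral_swap hint]
  congr 1 with y
  exact integral_fintype_prod_eq_pow (F · y)

local notation "𝕀" => Measure.restrict (volume : Measure ℝ) (Icc (0 : ℝ) 1)

instance : IsProbabilityMeasure 𝕀 := ⟨by simp⟩

/-- `exceedWeight q y a = q ^ #{u | a < y u}`: the factor of `q^{#{(i,u) : y_u > t_i}}`
contributed by a single coordinate `t_i = a`. -/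
def exceedWeight {κ : Type*} [Fintype κ] (q : ℝ) (y : κ → ℝ) (a : ℝ) : ℝ :=
  ∏ u, if a < y u then q else 1

section exceedWeight

variable {κ : Type*} [Fintype κ] {q : ℝ}

theorem pow_card_filter_lt_eq_prod_exceedWeight {ι : Type*} [Fintype ι] (t : ι → ℝ) (y : κ → ℝ) :
    q ^ (univ.filter fun p : ι × κ => t p.1 < y p.2).card = ∏ i, exceedWeight q y (t i) := by
  rw [← prod_const, prod_filter, Fintype.prod_prod_type]
  rfl

theorem exceedWeight_nonneg (hq0 : 0 ≤ q) (y : κ → ℝ) (a : ℝ) : 0 ≤ exceedWeight q y a :=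
  prod_nonneg fun u _ => by split_ifs <;> linarith

theorem norm_exceedWeight_le_one (hq0 : 0 ≤ q) (hq1 : q ≤ 1) (y : κ → ℝ) (a : ℝ) :
    ‖exceedWeight q y a‖ ≤ 1 := by
  rw [Real.norm_of_nonneg (exceedWeight_nonneg hq0 y a)]
  exact prod_le_one (fun u _ => by split_ifs <;> linarith) fun u _ => by split_ifs <;> linarith

theorem norm_exceedWeight_mul_exceedWeight_le_one (hq0 : 0 ≤ q) (hq1 : q ≤ 1) {κ' : Type*}
    [Fintype κ'] (y : κ → ℝ) (z : κ' → ℝ) (a b : ℝ) :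
    ‖exceedWeight q y a * exceedWeight q z b‖ ≤ 1 := by
  rw [norm_mul]
  exact mul_le_one₀ (norm_exceedWeight_le_one hq0 hq1 y a) (norm_nonneg _)
    (norm_exceedWeight_le_one hq0 hq1 z b)

theorem monotone_exceedWeight (hq0 : 0 ≤ q) (hq1 : q ≤ 1) (y : κ → ℝ) :
    Monotone (exceedWeight q y) := by
  intro a b hab
  refine prod_le_prod (fun u _ => by split_ifs <;> linarith) fun u _ => ?_
  by_cases hb : b < y u
  · simp [hb, hab.trans_lt hb]
  · split_ifs <;> linarith

@[fun_prop]
theorem measurable_exceedWeight_uncurry :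
    Measurable fun p : (κ → ℝ) × ℝ => exceedWeight q p.1 p.2 :=
  Finset.measurable_prod _ fun u _ =>
    Measurable.ite (measurableSet_lt (by fun_prop) (by fun_prop)) measurable_const
      measurable_const

theorem measurable_integral_exceedWeight {ν : Measure ℝ} [SFinite ν] :
    Measurable fun y : κ → ℝ => ∫ a, exceedWeight q y a ∂ν :=
  (measurable_exceedWeight_uncurry.stronglyMeasurable.integral_prod_right' (ν := ν)).measurable

theorem norm_integral_exceedWeight_le_one (hq0 : 0 ≤ q) (hq1 : q ≤ 1) {ν : Measure ℝ}
    [IsProbabilityMeasure ν] (y : κ → ℝ) : ‖∫ a, exceedWeight q y a ∂ν‖ ≤ 1 := by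
  simpa using norm_integral_le_of_norm_le_const (μ := ν)
    (ae_of_all _ (norm_exceedWeight_le_one hq0 hq1 y))

theorem integrable_integral_exceedWeight_pow (hq0 : 0 ≤ q) (hq1 : q ≤ 1) {ν : Measure ℝ}
    [IsProbabilityMeasure ν] {ρ : Measure (κ → ℝ)} [IsFiniteMeasure ρ] (N : ℕ) :
    Integrable (fun y => (∫ a, exceedWeight q y a ∂ν) ^ N) ρ :=
  Integrable.of_bound (measurable_integral_exceedWeight.pow_const N).aestronglyMeasurable 1
    (ae_of_all _ fun y => by
      rw [norm_pow]
      exact pow_le_one₀ (norm_nonneg _) (norm_integral_exceedWeight_le_one hq0 hq1 y))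

theorem integral_exceedWeight_mul_reflect_nonneg (hq0 : 0 ≤ q) {κ' : Type*} [Fintype κ']
    {ν : Measure ℝ} (y : κ → ℝ) (z : κ' → ℝ) :
    0 ≤ ∫ a, exceedWeight q y a * exceedWeight q z (1 - a) ∂ν :=
  integral_nonneg fun _ => mul_nonneg (exceedWeight_nonneg hq0 _ _) (exceedWeight_nonneg hq0 _ _)

theorem integral_exceedWeight_mul_reflect_le (hq0 : 0 ≤ q) (hq1 : q ≤ 1) {κ' : Type*}
    [Fintype κ'] (y : κ → ℝ) (z : κ' → ℝ) :
    ∫ a, exceedWeight q y a * exceedWeight q z (1 - a) ∂𝕀 ≤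
      (∫ a, exceedWeight q y a ∂𝕀) * ∫ a, exceedWeight q z a ∂𝕀 := by
  have hf := monotone_exceedWeight hq0 hq1 y
  have hg : Antitone fun a => exceedWeight q z (1 - a) :=
    (monotone_exceedWeight hq0 hq1 z).comp_antitone fun a b hab => by linarith
  have hbound {h : ℝ → ℝ} (hm : Measurable h) (hh : ∀ a, ‖h a‖ ≤ 1) : Integrable h 𝕀 :=
    Integrable.of_bound hm.aestronglyMeasurable 1 (ae_of_all _ hh)
  have hreflect : ∫ a, exceedWeight q z (1 - a) ∂𝕀 = ∫ a, exceedWeight q z a ∂𝕀 := by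
    simpa using setIntegral_Icc_comp_add_sub (exceedWeight q z) zero_le_one
  rw [← hreflect]
  exact integral_mul_le_integral_mul_integral_of_monotone_antitone hf hg
    (hbound hf.measurable (norm_exceedWeight_le_one hq0 hq1 y))
    (hbound hg.measurable fun a => norm_exceedWeight_le_one hq0 hq1 z _)
    (hbound (hf.measurable.mul hg.measurable) fun a =>
      norm_exceedWeight_mul_exceedWeight_le_one hq0 hq1 y z _ _)

theorem integral_exceedWeight_mul_reflect_pow_le (hq0 : 0 ≤ q) (hq1 : q ≤ 1) {κ' : Type*}
    [Fintype κ'] (y : κ → ℝ) (z : κ' → ℝ) (N : ℕ) :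
    (∫ a, exceedWeight q y a * exceedWeight q z (1 - a) ∂𝕀) ^ N ≤
      (∫ a, exceedWeight q y a ∂𝕀) ^ N * (∫ a, exceedWeight q z a ∂𝕀) ^ N :=
  (pow_le_pow_left₀ (integral_exceedWeight_mul_reflect_nonneg hq0 y z)
    (integral_exceedWeight_mul_reflect_le hq0 hq1 y z) N).trans_eq (mul_pow _ _ N)

end exceedWeight

theorem Aint_eq_integral_pow {q : ℝ} (hq0 : 0 ≤ q) (hq1 : q ≤ 1) (N k : ℕ) :
    Aint q N k = ∫ y, (∫ a, exceedWeight q y a ∂𝕀) ^ N ∂(Measure.pi fun _ : Fin k => 𝕀) := by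
  simp only [Aint, volume_pi, Measure.restrict_pi_pi, pow_card_filter_lt_eq_prod_exceedWeight]
  rw [integral_pi_integral_prod_eq_integral_pow (F := fun a y => exceedWeight q y a)
    (measurable_exceedWeight_uncurry.comp measurable_swap)
    fun a y => norm_exceedWeight_le_one hq0 hq1 y a,
    Fintype.card_fin]

/-- Opposite monotonicities: with
`B_r(t) = ∫_{[0,1]^r} q^{#{(i,u) : y_u > t_i}} dy` and
`C_s(t) = ∫_{[0,1]^s} q^{#{(i,w) : z_w > 1 − t_i}} dz`, one has
`∫_{[0,1]^N} B_r(t) C_s(t) dt ≤ A_{N,r}(q) A_{N,s}(q)`. -/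
theorem stmt_13 (q : ℝ) (hq0 : 0 < q) (hq1 : q < 1) (N r s : ℕ) :
    (∫ t in Set.univ.pi fun _ : Fin N => Set.Icc (0 : ℝ) 1,
      (∫ y in Set.univ.pi fun _ : Fin r => Set.Icc (0 : ℝ) 1,
        q ^ (Finset.univ.filter fun p : Fin N × Fin r => t p.1 < y p.2).card) *
      (∫ z in Set.univ.pi fun _ : Fin s => Set.Icc (0 : ℝ) 1,
        q ^ (Finset.univ.filter fun p : Fin N × Fin s => 1 - t p.1 < z p.2).card)) ≤
      Aint q N r * Aint q N s := by
  have h0 : 0 ≤ q := hq0.le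
  have h1 : q ≤ 1 := hq1.le
  -- `simp` does not find the instance `t := fun i => 1 - t i` of the lemma by itself
  have hC (t : Fin N → ℝ) (z : Fin s → ℝ) :
      q ^ (univ.filter fun p : Fin N × Fin s => 1 - t p.1 < z p.2).card =
        ∏ i, exceedWeight q z (1 - t i) :=
    pow_card_filter_lt_eq_prod_exceedWeight (fun i => 1 - t i) z
  have hsplit (t : Fin N → ℝ) :
      (∫ y, ∏ i, exceedWeight q y (t i) ∂Measure.pi fun _ : Fin r => 𝕀) *
        (∫ z, ∏ i, exceedWeight q z (1 - t i) ∂Measure.pi fun _ : Fin s => 𝕀) =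
      ∫ p, ∏ i, (exceedWeight q p.1 (t i) * exceedWeight q p.2 (1 - t i))
        ∂(Measure.pi fun _ : Fin r => 𝕀).prod (Measure.pi fun _ : Fin s => 𝕀) := by
    rw [← integral_prod_mul]
    simp only [prod_mul_distrib]
  simp only [volume_pi, Measure.restrict_pi_pi, hC, pow_card_filter_lt_eq_prod_exceedWeight,
    hsplit]
  rw [integral_pi_integral_prod_eq_integral_pow
      (F := fun a (p : (Fin r → ℝ) × (Fin s → ℝ)) =>
        exceedWeight q p.1 a * exceedWeight q p.2 (1 - a)) (by fun_prop)
      fun a p => norm_exceedWeight_mul_exceedWeight_le_one h0 h1 p.1 p.2 a (1 - a),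
    Fintype.card_fin, Aint_eq_integral_pow h0 h1, Aint_eq_integral_pow h0 h1,
    ← integral_prod_mul]
  exact integral_mono_of_nonneg
    (ae_of_all _ fun p => pow_nonneg (integral_exceedWeight_mul_reflect_nonneg h0 p.1 p.2) N)
    ((integrable_integral_exceedWeight_pow h0 h1 N).mul_prod
      (integrable_integral_exceedWeight_pow h0 h1 N))
    (ae_of_all _ fun p => integral_exceedWeight_mul_reflect_pow_le h0 h1 p.1 p.2 N)

end
end

section
/- Let d ≥ 1 and h ≥ 1 be integers, let M be an integer with M > 4h, and fix a root vertex o of the hypercube Q_d. Then the map f ↦ (f mod M) is a bijection from the set {f : V(Q_d) → ℤ : f(o) = 0 and |f(u) − f(v)| ≤ h for every edge uv of Q_d} onto the set {φ : V(Q_d) → ℤ/Mℤ : φ(o) = 0 and for every edge uv of Q_d, φ(u) − φ(v) lies in the image of {−h, −h+1, …, h} under reduction mod M}. -/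
/-!
Given `φ : V(Q_d) → ℤ/Mℤ` with small increments, lift each increment `φ b - φ a` along an
edge to its representative in `[-h, h]`, namely `(φ b - φ a).valMinAbs`. Along any two
consecutive edges `a → b → c` the two lifts add up to the representative of `φ c - φ a`,
because their sum has absolute value at most `2h < M / 2`. Hence the lifted cochain is closed
on every 4-cycle of `Q_d`, and summing it along monotone paths from `o` gives an
`h`-Lipschitz `f` with `f mod M = φ`. Injectivity: two lifts of `φ` have increments that agree
mod `M` and lie in `[-h, h]`, so they coincide.
-/

noncomputable section

/-- The hypercube graph `Q_d`: vertices are 0/1-vectors of length `d`, adjacent when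
they differ in exactly one coordinate. -/
def hypercube (d : ℕ) : SimpleGraph (Fin d → Bool) where
  Adj u v := hammingDist u v = 1
  symm := ⟨fun u v h => by show hammingDist v u = 1; rw [hammingDist_comm]; exact h⟩
  loopless := ⟨fun v h => by simp [hammingDist_self] at h⟩

open Function Finset

theorem hypercube_adj_update {d : ℕ} {a : Fin d → Bool} {i : Fin d} {x : Bool}
    (hx : update a i x ≠ a) : (hypercube d).Adj (update a i x) a := by
  have hxa : x ≠ a i := fun h => hx (update_eq_self_iff.mpr h)
  show hammingDist (update a i x) a = 1
  rw [hammingDist, card_eq_one]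
  refine ⟨i, ext fun j => ?_⟩
  rcases eq_or_ne j i with rfl | hji
  · simp [hxa]
  · simp [hji]

theorem exists_eq_update_of_hypercube_adj {d : ℕ} {u v : Fin d → Bool}
    (huv : (hypercube d).Adj u v) : ∃ i, u = update v i (u i) := by
  obtain ⟨i, hi⟩ := card_eq_one.mp (show hammingDist u v = 1 from huv)
  refine ⟨i, funext fun j => ?_⟩
  rcases eq_or_ne j i with rfl | hji
  · simp
  · have : j ∉ ({i} : Finset (Fin d)) := by simpa using hji
    rw [← hi] at this
    simpa [hji] using this

theorem rel_update_of_forall_hypercube_adj {d : ℕ} {r : (Fin d → Bool) → (Fin d → Bool) → Prop}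
    (hrefl : ∀ a, r a a) (hadj : ∀ u v, (hypercube d).Adj u v → r u v)
    (a : Fin d → Bool) (i : Fin d) (x : Bool) : r (update a i x) a := by
  rcases eq_or_ne (update a i x) a with hx | hx
  · rw [hx]; exact hrefl a
  · exact hadj _ _ (hypercube_adj_update hx)

theorem eq_of_forall_update_sub_eq {ι β G : Type*} [Fintype ι] [DecidableEq ι] [AddGroup G]
    {F F' : (ι → β) → G} {o : ι → β} (ho : F o = F' o)
    (hF : ∀ a i x, F (update a i x) - F a = F' (update a i x) - F' a) : F = F' := by
  funext v
  suffices ∀ s : Finset ι, F (s.piecewise v o) = F' (s.piecewise v o) by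
    simpa using this univ
  intro s
  induction s using Finset.induction_on with
  | empty => simpa using ho
  | insert i s _ ih =>
    have step := hF (s.piecewise v o) i (v i)
    rw [ih] at step
    rw [piecewise_insert, sub_left_inj.mp step]

section Potential

variable {d : ℕ} {α G : Type*}

def cubePath (o v : Fin d → α) (k : ℕ) : Fin d → α :=
  fun i => if (i : ℕ) < k then v i else o i

variable {o v : Fin d → α}

theorem cubePath_zero : cubePath o v 0 = o := by
  funext i; simp [cubePath]

theorem cubePath_dim : cubePath o v d = v := by
  funext i; simp [cubePath]

theorem cubePath_root (k : ℕ) : cubePath o o k = o := by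
  funext i; simp [cubePath]

theorem cubePath_succ (i : Fin d) :
    cubePath o v (i + 1) = update (cubePath o v i) i (v i) := by
  funext k
  rcases eq_or_ne k i with rfl | hk
  · simp [cubePath]
  · have : (k : ℕ) < i + 1 ↔ (k : ℕ) < i := by have := Fin.val_ne_of_ne hk; omega
    simp only [cubePath, update_of_ne hk, this]

theorem cubePath_update_of_le {j : Fin d} {x : α} {k : ℕ} (hk : k ≤ j) :
    cubePath o (update v j x) k = cubePath o v k := by
  funext i
  simp only [cubePath]
  split_ifs with hi
  · exact update_of_ne (fun h => by omega) _ _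
  · rfl

theorem cubePath_update_of_lt {j : Fin d} {x : α} {k : ℕ} (hk : (j : ℕ) < k) :
    cubePath o (update v j x) k = update (cubePath o v k) j x := by
  funext i
  rcases eq_or_ne i j with rfl | hi
  · simp [cubePath, hk]
  · simp [cubePath, hi]

variable [AddCommGroup G]

/-- For `i = j` this says that `ε` is additive on triangles inside a coordinate line; for `i ≠ j`,
applied to both orders of the two updates, that `ε` is closed on the 4-cycle they span. -/
def IsTwoStepAdditive (ε : (Fin d → α) → (Fin d → α) → G) : Prop :=
  ∀ a i x j y, ε a (update a i x) + ε (update a i x) (update (update a i x) j y) =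
    ε a (update (update a i x) j y)

def pathSum (ε : (Fin d → α) → (Fin d → α) → G) (o v : Fin d → α) (n : ℕ) : G :=
  ∑ k ∈ range n, ε (cubePath o v k) (cubePath o v (k + 1))

variable {ε : (Fin d → α) → (Fin d → α) → G}

theorem pathSum_succ (n : ℕ) :
    pathSum ε o v (n + 1) = pathSum ε o v n + ε (cubePath o v n) (cubePath o v (n + 1)) :=
  sum_range_succ _ _

namespace IsTwoStepAdditive

theorem apply_self (hε : IsTwoStepAdditive ε) (i : Fin d) (a : Fin d → α) : ε a a = 0 := by
  simpa using hε a i (a i) i (a i)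

theorem cubePath_square (hε : IsTwoStepAdditive ε) (j : Fin d) (x : α) (i : Fin d) :
    ε (cubePath o v i) (cubePath o (update v j x) i) +
        ε (cubePath o (update v j x) i) (cubePath o (update v j x) (i + 1)) =
      ε (cubePath o v i) (cubePath o v (i + 1)) +
        ε (cubePath o v (i + 1)) (cubePath o (update v j x) (i + 1)) := by
  have hrefl := hε.apply_self j
  rcases lt_or_ge (i : ℕ) j with hij | hji
  · rw [cubePath_update_of_le hij.le, cubePath_update_of_le (k := i + 1) hij, hrefl, hrefl,
      zero_add, add_zero]
  rw [cubePath_update_of_lt (k := i + 1) (by omega), cubePath_succ]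
  have hb := hε (cubePath o v i) i (v i) j x
  rcases hji.eq_or_lt with hij | hji
  · obtain rfl : j = i := Fin.ext hij
    rw [cubePath_update_of_le le_rfl, hrefl, zero_add, hb, update_idem]
  · rw [cubePath_update_of_lt hji, hb, update_comm (Fin.ne_of_lt hji).symm]
    exact hε _ _ _ _ _

theorem pathSum_update_sub (hε : IsTwoStepAdditive ε) (j : Fin d) (x : α) :
    ∀ n ≤ d, pathSum ε o (update v j x) n - pathSum ε o v n =
      ε (cubePath o v n) (cubePath o (update v j x) n) := by
  intro n
  induction n with
  | zero => simp [pathSum, cubePath_zero, hε.apply_self j]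
  | succ n ih =>
    intro hn
    have hsq := hε.cubePath_square (o := o) (v := v) j x ⟨n, hn⟩
    rw [pathSum_succ, pathSum_succ, ← sub_add_sub_comm, ih (by omega), ← sub_eq_zero]
    linear_combination (norm := abel) hsq

theorem exists_potential (hε : IsTwoStepAdditive ε) (o : Fin d → α) :
    ∃ F : (Fin d → α) → G, F o = 0 ∧ ∀ a i x, F (update a i x) - F a = ε a (update a i x) := by
  refine ⟨fun v => pathSum ε o v d, ?_, fun a j x => ?_⟩
  · refine sum_eq_zero fun k hk => ?_
    rw [cubePath_root, cubePath_root]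
    exact hε.apply_self ⟨k, mem_range.mp hk⟩ o
  · simpa only [cubePath_dim] using hε.pathSum_update_sub j x d le_rfl

end IsTwoStepAdditive

end Potential

theorem ZMod.valMinAbs_intCast_of_two_mul_abs_lt {n : ℕ} {a : ℤ} (ha : 2 * |a| < n) :
    (a : ZMod n).valMinAbs = a := by
  have : NeZero n := ⟨by rintro rfl; push_cast at ha; linarith [abs_nonneg a]⟩
  rw [ZMod.valMinAbs_spec]
  refine ⟨rfl, ?_, ?_⟩ <;> linarith [neg_abs_le a, le_abs_self a]

theorem ZMod.valMinAbs_add_of_two_mul_abs_lt {n : ℕ} {x y : ZMod n}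
    (h : 2 * |x.valMinAbs + y.valMinAbs| < n) :
    (x + y).valMinAbs = x.valMinAbs + y.valMinAbs := by
  rw [← ZMod.valMinAbs_intCast_of_two_mul_abs_lt h]
  push_cast [ZMod.coe_valMinAbs]
  rfl

section Lifting

variable {d h M : ℕ}

def rootedLipschitz (d h : ℕ) (o : Fin d → Bool) : Set ((Fin d → Bool) → ℤ) :=
  {f | f o = 0 ∧ ∀ u v, (hypercube d).Adj u v → |f u - f v| ≤ (h : ℤ)}

def rootedModLipschitz (d h M : ℕ) (o : Fin d → Bool) : Set ((Fin d → Bool) → ZMod M) :=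
  {φ | φ o = 0 ∧ ∀ u v, (hypercube d).Adj u v →
    ∃ a : ℤ, -(h : ℤ) ≤ a ∧ a ≤ (h : ℤ) ∧ φ u - φ v = (a : ZMod M)}

theorem mapsTo_rootedModLipschitz (o : Fin d → Bool) :
    Set.MapsTo (fun (f : (Fin d → Bool) → ℤ) v => (f v : ZMod M))
      (rootedLipschitz d h o) (rootedModLipschitz d h M o) := by
  rintro f ⟨hf0, hf⟩
  refine ⟨by simp [hf0], fun u v huv => ?_⟩
  obtain ⟨h₁, h₂⟩ := abs_le.mp (hf u v huv)
  exact ⟨f u - f v, h₁, h₂, by push_cast; rfl⟩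

theorem injOn_rootedLipschitz (hM : 2 * h < M) (o : Fin d → Bool) :
    Set.InjOn (fun (f : (Fin d → Bool) → ℤ) v => (f v : ZMod M)) (rootedLipschitz d h o) := by
  rintro f ⟨hf0, hf⟩ g ⟨hg0, hg⟩ hfg
  have hfg (v : Fin d → Bool) : (f v : ZMod M) = g v := congrFun hfg v
  have hlift {f : (Fin d → Bool) → ℤ} (hf : ∀ u v, (hypercube d).Adj u v → |f u - f v| ≤ h)
      (a i x) : ((f (update a i x) - f a : ℤ) : ZMod M).valMinAbs = f (update a i x) - f a :=
    ZMod.valMinAbs_intCast_of_two_mul_abs_lt <| by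
      have := rel_update_of_forall_hypercube_adj (r := fun u v => |f u - f v| ≤ h)
        (by simp) hf a i x
      omega
  refine eq_of_forall_update_sub_eq (hf0.trans hg0.symm) fun a i x => ?_
  rw [← hlift hf, ← hlift hg]
  push_cast
  rw [hfg, hfg]

theorem surjOn_rootedModLipschitz (hM : 4 * h < M) (o : Fin d → Bool) :
    Set.SurjOn (fun (f : (Fin d → Bool) → ℤ) v => (f v : ZMod M))
      (rootedLipschitz d h o) (rootedModLipschitz d h M o) := by
  rintro φ ⟨hφ0, hφ⟩
  set ε : (Fin d → Bool) → (Fin d → Bool) → ℤ := fun a b => (φ b - φ a).valMinAbs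
  have hsmall (a i x) : |ε a (update a i x)| ≤ h := by
    obtain ⟨z, hz₁, hz₂, hz⟩ := rel_update_of_forall_hypercube_adj
      (r := fun u v => ∃ z : ℤ, -(h : ℤ) ≤ z ∧ z ≤ h ∧ φ u - φ v = z)
      (fun a => ⟨0, by simp, by simp, by simp⟩) hφ a i x
    have hz' : |z| ≤ h := abs_le.mpr ⟨hz₁, hz₂⟩
    have hεz : ε a (update a i x) = z := by
      simp only [ε, hz]
      exact ZMod.valMinAbs_intCast_of_two_mul_abs_lt (by omega)
    rwa [hεz]
  have hε : IsTwoStepAdditive ε := fun a i x j y => by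
    have := abs_add_le (ε a (update a i x)) (ε (update a i x) (update (update a i x) j y))
    have := hsmall a i x
    have := hsmall (update a i x) j y
    have key := ZMod.valMinAbs_add_of_two_mul_abs_lt
      (show 2 * |ε a (update a i x) + ε (update a i x) (update (update a i x) j y)| < M by omega)
    rw [sub_add_sub_cancel'] at key
    exact key.symm
  obtain ⟨F, hF0, hF⟩ := hε.exists_potential o
  refine ⟨F, ⟨hF0, fun u v huv => ?_⟩, ?_⟩
  · obtain ⟨i, hi⟩ := exists_eq_update_of_hypercube_adj huv
    rw [hi, hF]
    exact hsmall v i (u i)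
  · refine eq_of_forall_update_sub_eq (o := o) (by simp [hF0, hφ0]) fun a i x => ?_
    rw [← Int.cast_sub, hF, ZMod.coe_valMinAbs]

end Lifting

theorem stmt_18_general (d h M : ℕ) (hM : 4 * h < M)
    (o : Fin d → Bool) :
    Set.BijOn (fun (f : (Fin d → Bool) → ℤ) (v : Fin d → Bool) => ((f v : ℤ) : ZMod M))
      {f : (Fin d → Bool) → ℤ | f o = 0 ∧
        ∀ u v, (hypercube d).Adj u v → |f u - f v| ≤ (h : ℤ)}
      {φ : (Fin d → Bool) → ZMod M | φ o = 0 ∧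
        ∀ u v, (hypercube d).Adj u v →
          ∃ a : ℤ, -(h : ℤ) ≤ a ∧ a ≤ (h : ℤ) ∧ φ u - φ v = (a : ZMod M)} :=
  ⟨mapsTo_rootedModLipschitz o, injOn_rootedLipschitz (by omega) o,
    surjOn_rootedModLipschitz hM o⟩

/-- Rooted `h`-Lipschitz functions on `Q_d` biject with rooted homomorphism-type maps
to `ℤ/Mℤ` whose edge increments are reductions of integers in `[−h, h]`, provided
`M > 4h`. -/
theorem stmt_18 (d h M : ℕ) (hd : 1 ≤ d) (hh : 1 ≤ h) (hM : 4 * h < M)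
    (o : Fin d → Bool) :
    Set.BijOn (fun (f : (Fin d → Bool) → ℤ) (v : Fin d → Bool) => ((f v : ℤ) : ZMod M))
      {f : (Fin d → Bool) → ℤ | f o = 0 ∧
        ∀ u v, (hypercube d).Adj u v → |f u - f v| ≤ (h : ℤ)}
      {φ : (Fin d → Bool) → ZMod M | φ o = 0 ∧
        ∀ u v, (hypercube d).Adj u v →
          ∃ a : ℤ, -(h : ℤ) ≤ a ∧ a ≤ (h : ℤ) ∧ φ u - φ v = (a : ZMod M)} :=
  stmt_18_general d h M hM o

end
end

section
/- Let H be a finite connected simple graph with vertex set V, and let r, r' ∈ V. Define P_H(r) = {x ∈ ℝ^V : x_r = 0 and |x(u) − x(v)| ≤ 1 for every edge uv of H}, and similarly P_H(r'). Then the (|V|−1)-dimensional Lebesgue volumes of P_H(r) and P_H(r') are equal. -/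
/-!
Subtracting the constant `x r'` maps `P_H(r)` bijectively onto `P_H(r')`, since the edge
constraints only see differences. Forgetting the root coordinate, this map becomes a relabelling
of coordinates after the shear `y ↦ y[r' := 0] - y r'`; the shear is a linear involution, so its
determinant is `±1` and it preserves Lebesgue measure.
-/

open MeasureTheory
open scoped ENNReal

noncomputable section

/-- The rooted Lipschitz polytope of a connected graph `H` with root `r`. -/
def rootedPolytope {V : Type*} (H : SimpleGraph V) (r : V) : Set (V → ℝ) :=
  {x | x r = 0 ∧ ∀ u v, H.Adj u v → |x u - x v| ≤ 1}

/-- The `(|V|−1)`-dimensional volume of the rooted Lipschitz polytope: the Lebesgue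
measure of its image under the coordinate projection forgetting the `r`-coordinate. -/
def rootedVol {V : Type*} [Fintype V] [DecidableEq V] (H : SimpleGraph V) (r : V) : ℝ≥0∞ :=
  volume ((fun (x : V → ℝ) (v : {v : V // v ≠ r}) => x v.1) '' rootedPolytope H r)

theorem MeasureTheory.Measure.addHaar_image_linearMap_of_involutive {E : Type*}
    [NormedAddCommGroup E] [NormedSpace ℝ E] [MeasurableSpace E] [BorelSpace E]
    [FiniteDimensional ℝ E] (μ : Measure E) [μ.IsAddHaarMeasure] {f : E →ₗ[ℝ] E}
    (hf : Function.Involutive f) (s : Set E) : μ (f '' s) = μ s := by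
  have hsq : LinearMap.det f * LinearMap.det f = 1 := by
    rw [← LinearMap.det_comp, show f ∘ₗ f = LinearMap.id from LinearMap.ext hf, LinearMap.det_id]
  have habs : |LinearMap.det f| = 1 := by
    rw [← abs_mul_abs_self] at hsq
    exact (mul_self_eq_one_iff.mp hsq).resolve_right (by linarith [abs_nonneg (LinearMap.det f)])
  rw [Measure.addHaar_image_linearMap, habs, ENNReal.ofReal_one, one_mul]

section Shear

variable {ι : Type*} [DecidableEq ι]

def shear (j : ι) : (ι → ℝ) →ₗ[ℝ] (ι → ℝ) where
  toFun y := Function.update y j 0 - Function.const ι (y j)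
  map_add' y z := by
    funext u
    simp only [Pi.add_apply, Pi.sub_apply, Function.update_apply, Function.const_apply]
    split_ifs <;> ring
  map_smul' c y := by
    funext u
    simp only [Pi.smul_apply, Pi.sub_apply, smul_eq_mul, RingHom.id_apply, Function.update_apply,
      Function.const_apply]
    split_ifs <;> ring

theorem shear_apply (j : ι) (y : ι → ℝ) (u : ι) :
    shear j y u = Function.update y j 0 u - y j := rfl

theorem shear_involutive (j : ι) : Function.Involutive (shear j) := by
  intro y
  funext u
  rcases eq_or_ne u j with rfl | hu
  · simp [shear_apply]
  · simp [shear_apply, hu]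

theorem volume_image_shear [Fintype ι] (j : ι) (s : Set (ι → ℝ)) :
    volume (shear j '' s) = volume s :=
  Measure.addHaar_image_linearMap_of_involutive volume (shear_involutive j) s

end Shear

theorem sub_const_mem_rootedPolytope {V : Type*} {H : SimpleGraph V} {r : V} {x : V → ℝ}
    (hx : x ∈ rootedPolytope H r) (r' : V) :
    (fun v => x v - x r') ∈ rootedPolytope H r' :=
  ⟨sub_self _, fun u v huv => by simpa using hx.2 u v huv⟩

section Reroot

variable {V : Type*} [DecidableEq V]

def complSwap (r r' : V) : {v : V // v ≠ r} ≃ {v : V // v ≠ r'} :=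
  (Equiv.swap r r').subtypeEquiv fun v => by simp [Equiv.swap_apply_eq_iff]

def reroot {r r' : V} (h : r ≠ r') : ({v : V // v ≠ r} → ℝ) → ({v : V // v ≠ r'} → ℝ) :=
  MeasurableEquiv.piCongrLeft (fun _ => ℝ) (complSwap r r') ∘ shear ⟨r', h.symm⟩

theorem reroot_restrict {r r' : V} (h : r ≠ r') {x : V → ℝ} (hx : x r = 0) :
    reroot h (fun v => x v.1) = fun v => x v.1 - x r' := by
  funext u'
  obtain ⟨u, rfl⟩ := (complSwap r r').surjective u'
  rw [reroot, Function.comp_apply, MeasurableEquiv.piCongrLeft_apply_apply, shear_apply]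
  simp only [complSwap, Equiv.subtypeEquiv_apply]
  rcases eq_or_ne u.1 r' with hu | hu
  · have : u = ⟨r', h.symm⟩ := Subtype.ext hu
    subst this
    simp [hx]
  · rw [Function.update_of_ne (fun h' => hu (congrArg Subtype.val h')),
      Equiv.swap_apply_of_ne_of_ne u.2 hu]

theorem image_reroot_restrict_rootedPolytope (H : SimpleGraph V) {r r' : V} (h : r ≠ r') :
    reroot h '' ((fun x v => x v.1) '' rootedPolytope H r) =
      (fun x v => x v.1) '' rootedPolytope H r' := by
  rw [← Set.image_comp]
  apply Set.Subset.antisymm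
  · rintro _ ⟨x, hx, rfl⟩
    exact ⟨_, sub_const_mem_rootedPolytope hx r', (reroot_restrict h hx.1).symm⟩
  · rintro _ ⟨x', hx', rfl⟩
    refine ⟨_, sub_const_mem_rootedPolytope hx' r, ?_⟩
    rw [Function.comp_apply, reroot_restrict h (x := fun v => x' v - x' r) (sub_self _)]
    simp [hx'.1]

theorem volume_image_reroot [Fintype V] {r r' : V} (h : r ≠ r')
    (s : Set ({v : V // v ≠ r} → ℝ)) :
    volume (reroot h '' s) = volume s := by
  rw [reroot, Set.image_comp, MeasurableEquiv.image_eq_preimage_symm,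
    ((volume_measurePreserving_piCongrLeft _ _).symm).measure_preimage_equiv, volume_image_shear]

end Reroot

theorem stmt_19_general {V : Type*} [Fintype V] [DecidableEq V] (H : SimpleGraph V)
    (r r' : V) :
    rootedVol H r = rootedVol H r' := by
  rcases eq_or_ne r r' with rfl | h
  · rfl
  rw [rootedVol, rootedVol, ← image_reroot_restrict_rootedPolytope H h, volume_image_reroot]

/-- The rooted Lipschitz volume of a connected graph does not depend on the root. -/
theorem stmt_19 {V : Type*} [Fintype V] [DecidableEq V] (H : SimpleGraph V)
    (hconn : H.Connected) (r r' : V) :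
    rootedVol H r = rootedVol H r' :=
  stmt_19_general H r r'

end
end
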